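/- arXiv:0710.0862 — 6 statements merged into one kernel-verified Lean document; each statement's English description precedes it below -/
import Mathlib

section
/- Let 0 ≤ r ≤ m, and let (M,N) and (M',N') be (m−r)×(r, m−r) pairs. Define the m×(r,m) pair ℋ(M,N) := ([I_r; 0_{m−r,r}], [[0_{r,r}, 0_{r,m−r}],[M, N]]) (block rows). If (M,N) and (M',N') are feedback similar, then ℋ(M,N) and ℋ(M',N') are feedback similar. -/
open Matrix

/-- An `m×(n,m)` pair: a pair `(B, A)` with `B ∈ ℂ^{m×n}` and `A ∈ ℂ^{m×m}`. -/
abbrev PairT (m n : ℕ) :=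
  Matrix (Fin m) (Fin n) ℂ × Matrix (Fin m) (Fin m) ℂ

/-- Feedback similarity of `m×(n,m)` pairs: `(B,A)` and `(B',A')` are feedback similar if
`B' = S⁻¹BP` and `A' = S⁻¹(AS + BU)` for some invertible `S, P` and some `U`. -/
def FSP {m n : ℕ} (X Y : PairT m n) : Prop :=
  ∃ (S : Matrix (Fin m) (Fin m) ℂ) (P : Matrix (Fin n) (Fin n) ℂ)
    (U : Matrix (Fin n) (Fin m) ℂ),
    IsUnit S ∧ IsUnit P ∧ Y.1 = S⁻¹ * X.1 * P ∧ Y.2 = S⁻¹ * (X.2 * S + X.1 * U)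

/-- An `m×(n,m,m)` triple: a triple `(C, B, A)` with `C ∈ ℂ^{m×n}` and `B, A ∈ ℂ^{m×m}`. -/
abbrev TripleT (m n : ℕ) :=
  Matrix (Fin m) (Fin n) ℂ × Matrix (Fin m) (Fin m) ℂ × Matrix (Fin m) (Fin m) ℂ

/-- Feedback similarity of `m×(n,m,m)` triples: `(C,B,A)` and `(C',B',A')` are feedback
similar if `C' = S⁻¹CP`, `B' = S⁻¹(BS + CV)`, `A' = S⁻¹(AS + CU)` for some invertible
`S, P` and some `U, V`. -/
def FST {m n : ℕ} (X Y : TripleT m n) : Prop :=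
  ∃ (S : Matrix (Fin m) (Fin m) ℂ) (P : Matrix (Fin n) (Fin n) ℂ)
    (U V : Matrix (Fin n) (Fin m) ℂ),
    IsUnit S ∧ IsUnit P ∧ Y.1 = S⁻¹ * X.1 * P ∧
    Y.2.1 = S⁻¹ * (X.2.1 * S + X.1 * V) ∧ Y.2.2 = S⁻¹ * (X.2.2 * S + X.1 * U)

/-- Frobenius norm of a complex matrix. -/
noncomputable def fnorm {p q : ℕ} (M : Matrix (Fin p) (Fin q) ℂ) : ℝ :=
  Real.sqrt (∑ i, ∑ j, ‖M i j‖ ^ 2)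

/-- Norm of a pair: `‖(B,A)‖ = ‖B‖ + ‖A‖`. -/
noncomputable def pnorm {m n : ℕ} (X : PairT m n) : ℝ := fnorm X.1 + fnorm X.2

/-- Norm of a triple: `‖(C,B,A)‖ = ‖C‖ + ‖B‖ + ‖A‖`. -/
noncomputable def tnorm {m n : ℕ} (X : TripleT m n) : ℝ :=
  fnorm X.1 + fnorm X.2.1 + fnorm X.2.2

/-- For an `s×(r,s)` pair `(M,N)`, the `(r+s)×(r,r+s)` pair
`ℋ(M,N) = ([I_r; 0], [[0,0],[M,N]])`.  (Here `s` plays the role of `m - r`.) -/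
def Hp (r s : ℕ) (M : Matrix (Fin s) (Fin r) ℂ) (N : Matrix (Fin s) (Fin s) ℂ) :
    PairT (r + s) r :=
  (fun i j => if (i:ℕ) = (j:ℕ) then 1 else 0,
   fun i j =>
     if hi : (i:ℕ) < r then 0
     else if hj : (j:ℕ) < r then
       M ⟨(i:ℕ) - r, by have := i.isLt; omega⟩ ⟨j, hj⟩
     else
       N ⟨(i:ℕ) - r, by have := i.isLt; omega⟩ ⟨(j:ℕ) - r, by have := j.isLt; omega⟩)

/-! If `(S, P, U)` takes `(M, N)` to `(M', N')`, then in block form over `Fin r ⊕ Fin s` the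
transformation `([[P, U], [0, S]], P, [U M', U N'])` takes `ℋ(M, N)` to `ℋ(M', N')`: the
identity block of `ℋ` absorbs `P`, and the feedback `[U M', U N']` produces exactly the top
row that the off-diagonal block `U` creates when conjugating. -/

theorem fsp_iff_exists_mul_eq {m n : ℕ} {X Y : PairT m n} :
    FSP X Y ↔ ∃ (S : Matrix (Fin m) (Fin m) ℂ) (P : Matrix (Fin n) (Fin n) ℂ)
      (U : Matrix (Fin n) (Fin m) ℂ),
      IsUnit S ∧ IsUnit P ∧ S * Y.1 = X.1 * P ∧ S * Y.2 = X.2 * S + X.1 * U := by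
  refine exists₃_congr fun S P U => and_congr_right fun hS => and_congr_right fun _ => ?_
  have := hS.invertible
  rw [eq_comm, Matrix.mul_assoc, inv_mul_eq_iff_eq_mul_of_invertible, eq_comm,
    eq_comm (a := Y.2), inv_mul_eq_iff_eq_mul_of_invertible, eq_comm (a := X.2 * S + X.1 * U)]

theorem fsp_reindex_of_mul_eq {ι : Type*} [Fintype ι] [DecidableEq ι] {m n : ℕ} (e : ι ≃ Fin m)
    {B B' : Matrix ι (Fin n) ℂ} {A A' : Matrix ι ι ℂ} (S : Matrix ι ι ℂ)
    (P : Matrix (Fin n) (Fin n) ℂ) (U : Matrix (Fin n) ι ℂ) (hS : IsUnit S) (hP : IsUnit P)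
    (hB : S * B' = B * P) (hA : S * A' = A * S + B * U) :
    FSP (reindex e (.refl _) B, reindex e e A) (reindex e (.refl _) B', reindex e e A') := by
  refine fsp_iff_exists_mul_eq.2 ⟨reindex e e S, P, reindex (.refl _) e U,
    (isUnit_submatrix_equiv _ _).2 hS, hP, ?_, ?_⟩ <;>
    simp only [reindex_apply, Equiv.refl_symm, Equiv.coe_refl, submatrix_mul_equiv]
  · rw [hB, submatrix_mul _ _ _ id _ Function.bijective_id, submatrix_id_id]
  · rw [hA, ← submatrix_mul _ _ _ id _ Function.bijective_id]
    rfl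

theorem Hp_eq_reindex (r s : ℕ) (M : Matrix (Fin s) (Fin r) ℂ) (N : Matrix (Fin s) (Fin s) ℂ) :
    Hp r s M N = (reindex finSumFinEquiv (.refl _) (fromRows 1 0),
      reindex finSumFinEquiv finSumFinEquiv (fromBlocks 0 0 M N)) := by
  ext i j
  · refine Fin.addCases (fun x => ?_) (fun x => ?_) i <;> simp [Hp, one_apply, Fin.ext_iff]
    omega
  · refine Fin.addCases (fun x => ?_) (fun x => ?_) i <;>
      refine Fin.addCases (fun y => ?_) (fun y => ?_) j <;> simp [Hp]

/-- if `(M,N)` and `(M',N')` are feedback similar, then so are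
`ℋ(M,N)` and `ℋ(M',N')`. -/
theorem stmt3 (r s : ℕ) (M M' : Matrix (Fin s) (Fin r) ℂ) (N N' : Matrix (Fin s) (Fin s) ℂ)
    (h : FSP (M, N) (M', N')) : FSP (Hp r s M N) (Hp r s M' N') := by
  obtain ⟨S, P, U, hS, hP, hM, hN⟩ := fsp_iff_exists_mul_eq.1 h
  rw [Hp_eq_reindex, Hp_eq_reindex]
  refine fsp_reindex_of_mul_eq _ (fromBlocks P U 0 S) P (fromCols (U * M') (U * N'))
    (isUnit_fromBlocks_zero₂₁.2 ⟨hP, hS⟩) hP ?_ ?_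
  · simp [fromBlocks_mul_fromRows, fromRows_mul]
  · dsimp only at hM hN
    simp [fromBlocks_multiply, fromBlocks_add, hM, hN, add_comm]
end

section
/- For all integers m ≥ 1 and n ≥ 1, the pairs 𝔉_{mn} and ℋ_{mn} are feedback similar. -/
open Matrix

/-- The canonical pair `𝔉_{mn}`, written entrywise (see the paper):
`B`-entry 1 iff `i = j`, `A`-entry 1 iff `i = j + n`. -/
def Fpair (m n : ℕ) : PairT m n :=
  (fun i j => if (i:ℕ) = (j:ℕ) then 1 else 0,
   fun i j => if (i:ℕ) = (j:ℕ) + n then 1 else 0)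

/-- `G_{mn} = [0_{m,n-m} I_m]` (for `m ≤ n`), written entrywise: entry 1 iff
`j = i + (n - m)`. -/
def Gmat (m n : ℕ) : Matrix (Fin m) (Fin n) ℂ := fun i j =>
  if (j:ℕ) = (i:ℕ) + (n - m) then 1 else 0

/-- The canonical pair `ℋ_{mn}`, where `m = α n + β`, `0 < β ≤ n`:
`ℋ_{mn} = (G_{mn}, 0)` if `m ≤ n`; and `ℋ_{mn} = ([I_n; 0], [0_{n,m}; H_{m-n,m}])`
if `m > n`, where `H_{m-n,m} = [[I_{(α-1)n}, 0, 0], [0, G_{βn}, 0_β]]`.  Written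
entrywise: row `i ≥ n` of the `A`-part has entry 1 at column `j = i - n` if
`i - n < (α-1)n`, and at column `j = i - n + (n - β) = i - β` otherwise. -/
def Hpair (m n α β : ℕ) : PairT m n :=
  if m ≤ n then (Gmat m n, 0)
  else
    (fun i j => if (i:ℕ) = (j:ℕ) then 1 else 0,
     fun i j =>
       if (i:ℕ) < n then 0
       else if (i:ℕ) - n < (α - 1) * n then (if (j:ℕ) = (i:ℕ) - n then 1 else 0)
       else (if (j:ℕ) = (i:ℕ) - β then 1 else 0))

/-! Both pairs are related by a simultaneous permutation of states and inputs, so the feedback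
`U = 0` and permutation matrices `S`, `P` suffice. In `𝔉` the state `j` is sent to `j + n`, so its
chains are the residue classes mod `n`. In `ℋ` the chain through input `j` is
`j, j + n, …, j + (α - 1) n`, continued by `j + (α - 1) n + β` when `j ≥ n - β`. Rotating each of
the first `α` blocks of length `n` by `β` and fixing the last `β` states (`blockRotate`) carries
these chains onto those of `𝔉`; when `m ≤ n` only the inputs need to be rotated. -/

theorem fsp_submatrix {m n : ℕ} (X : PairT m n) (σ : Equiv.Perm (Fin m))
    (π : Equiv.Perm (Fin n)) : FSP X (X.1.submatrix σ π, X.2.submatrix σ σ) := by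
  have hσ : σ.permMatrix ℂ * Equiv.Perm.permMatrix ℂ σ.symm = 1 := by
    rw [← Equiv.Perm.inv_def, ← permMatrix_mul, inv_mul_cancel, permMatrix_one]
  refine ⟨Equiv.Perm.permMatrix ℂ σ.symm, Equiv.Perm.permMatrix ℂ π.symm, 0,
    (Group.isUnit σ).map (permMatrixHom (R := ℂ)), (Group.isUnit π).map (permMatrixHom (R := ℂ)),
    ?_, ?_⟩ <;>
  simp [Matrix.inv_eq_left_inv hσ, PEquiv.toMatrix_toPEquiv_mul, PEquiv.mul_toMatrix_toPEquiv]

theorem exists_perm_val_eq_of_injective {m : ℕ} {f : ℕ → ℕ} (hf : Function.Injective f)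
    (hlt : ∀ x < m, f x < m) : ∃ σ : Equiv.Perm (Fin m), ∀ i, (σ i : ℕ) = f i := by
  let g : Fin m → Fin m := fun i => ⟨f i, hlt i i.2⟩
  have hg : Function.Injective g := fun i j h => Fin.ext (hf (congrArg Fin.val h))
  exact ⟨Equiv.ofBijective g hg.bijective_of_finite, fun _ => rfl⟩

def blockRotate (n β k x : ℕ) : ℕ :=
  if x < k * n then n * (x / n) + (x % n + β) % n else x

section blockRotate

variable {n β k x : ℕ}

theorem blockRotate_of_lt (h : x < k * n) :
    blockRotate n β k x = n * (x / n) + (x % n + β) % n :=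
  if_pos h

theorem blockRotate_of_le (h : k * n ≤ x) : blockRotate n β k x = x :=
  if_neg h.not_gt

theorem blockRotate_div (hn : 0 < n) (h : x < k * n) : blockRotate n β k x / n = x / n := by
  rw [blockRotate_of_lt h, Nat.mul_add_div hn, Nat.div_eq_of_lt (Nat.mod_lt _ hn), add_zero]

theorem blockRotate_mod (h : x < k * n) : blockRotate n β k x % n = (x % n + β) % n := by
  rw [blockRotate_of_lt h, Nat.mul_add_mod, Nat.mod_mod]

theorem blockRotate_lt_mul_iff (hn : 0 < n) {j : ℕ} :
    blockRotate n β k x < j * n ↔ x < j * n := by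
  rcases lt_or_ge x (k * n) with h | h
  · rw [← Nat.div_lt_iff_lt_mul hn, ← Nat.div_lt_iff_lt_mul hn, blockRotate_div hn h]
  · rw [blockRotate_of_le h]

theorem blockRotate_lt (hn : 0 < n) {m : ℕ} (hk : k * n ≤ m) (hx : x < m) :
    blockRotate n β k x < m := by
  rcases lt_or_ge x (k * n) with h | h
  · exact ((blockRotate_lt_mul_iff hn).2 h).trans_le hk
  · rwa [blockRotate_of_le h]

theorem blockRotate_injective (hn : 0 < n) : Function.Injective (blockRotate n β k) := by
  intro x y hxy
  have hlt : x < k * n ↔ y < k * n := by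
    rw [← blockRotate_lt_mul_iff (β := β) hn, hxy, blockRotate_lt_mul_iff hn]
  by_cases hx : x < k * n
  · have hy := hlt.1 hx
    have hdiv : x / n = y / n := by rw [← blockRotate_div hn hx, hxy, blockRotate_div hn hy]
    have hmod : x % n = y % n := by
      have h : (x % n + β) % n = (y % n + β) % n := by
        rw [← blockRotate_mod hx, hxy, blockRotate_mod hy]
      simpa [Nat.ModEq] using Nat.ModEq.add_right_cancel' β h
    rw [← Nat.div_add_mod x n, ← Nat.div_add_mod y n, hdiv, hmod]
  · have hy := mt hlt.2 hx
    rwa [blockRotate_of_le (not_lt.1 hx), blockRotate_of_le (not_lt.1 hy)] at hxy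

theorem blockRotate_add (hn : 0 < n) (h : x + n < k * n) :
    blockRotate n β k (x + n) = blockRotate n β k x + n := by
  rw [blockRotate_of_lt h, blockRotate_of_lt (by omega), Nat.add_div_right _ hn,
    Nat.add_mod_right]
  ring

theorem blockRotate_sub_add (hβn : β ≤ n) (hk : 0 < k) (h₁ : k * n ≤ x) (h₂ : x < k * n + β) :
    blockRotate n β k (x - β) + n = x := by
  obtain ⟨k, rfl⟩ : ∃ k', k = k' + 1 := ⟨k - 1, by omega⟩
  have hkn : (k + 1) * n = n * k + n := by ring
  have hdm : (x - β) / n = k ∧ (x - β) % n = x - n * k - β :=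
    (Nat.div_mod_unique (by omega)).2 ⟨by omega, by omega⟩
  have hmod : (x - n * k - β + β) % n = x - (k + 1) * n := by
    rw [show x - n * k - β + β = x - (k + 1) * n + n by omega, Nat.add_mod_right,
      Nat.mod_eq_of_lt (by omega)]
  rw [blockRotate_of_lt (by omega), hdm.1, hdm.2, hmod]
  omega

theorem blockRotate_eq_add_iff (hn : 0 < n) (hβn : β ≤ n) (hk : 0 < k) (hx : x < k * n + β)
    {y : ℕ} : blockRotate n β k x = blockRotate n β k y + n ↔
      n ≤ x ∧ y = if x < k * n then x - n else x - β := by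
  by_cases hxn : x < n
  · have h : blockRotate n β k x < 1 * n := (blockRotate_lt_mul_iff hn).2 (by omega)
    omega
  have hpred :
      blockRotate n β k (if x < k * n then x - n else x - β) + n = blockRotate n β k x := by
    split_ifs with h
    · rw [← blockRotate_add hn (by omega), Nat.sub_add_cancel (not_lt.1 hxn)]
    · rw [blockRotate_sub_add hβn hk (not_lt.1 h) hx, blockRotate_of_le (not_lt.1 h)]
  rw [← hpred, Nat.add_right_cancel_iff, (blockRotate_injective hn).eq_iff]
  simp [not_lt.1 hxn, eq_comm]

end blockRotate

theorem fpair_fst_apply {m n : ℕ} (i : Fin m) (j : Fin n) :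
    (Fpair m n).1 i j = if (i : ℕ) = j then 1 else 0 :=
  rfl

theorem fpair_snd_apply {m n : ℕ} (i j : Fin m) :
    (Fpair m n).2 i j = if (i : ℕ) = j + n then 1 else 0 :=
  rfl

theorem fsp_fpair_gmat {m n : ℕ} (hn : 0 < n) (hmn : m ≤ n) :
    FSP (Fpair m n) (Gmat m n, 0) := by
  obtain ⟨π, hπ⟩ := exists_perm_val_eq_of_injective (m := n)
    (blockRotate_injective (β := m) (k := 1) hn) fun x hx => blockRotate_lt hn (by simp) hx
  have hπ_eq_iff : ∀ (i : Fin m) (y : ℕ), (i : ℕ) = blockRotate n m 1 y ↔ y = i + (n - m) := by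
    intro i y
    have h := blockRotate_sub_add (x := i + n) hmn one_pos (by simp) (by have := i.isLt; omega)
    rw [show (i : ℕ) + n - m = i + (n - m) by omega, Nat.add_right_cancel_iff] at h
    conv_lhs => rw [← h]
    rw [(blockRotate_injective hn).eq_iff, eq_comm]
  have hG : (Gmat m n, 0) = ((Fpair m n).1.submatrix (Equiv.refl _) π,
      (Fpair m n).2.submatrix (Equiv.refl _) (Equiv.refl _)) := by
    refine Prod.ext ?_ ?_ <;> ext i j
    · simp only [submatrix_apply, Equiv.refl_apply, Gmat, fpair_fst_apply, hπ, hπ_eq_iff]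
    · simp only [submatrix_apply, Matrix.zero_apply, fpair_snd_apply]
      rw [if_neg (by omega)]
  rw [hG]
  exact fsp_submatrix _ _ _

theorem fsp_fpair_hpair_of_lt {m n α β : ℕ} (hn : 0 < n) (hdec : m = α * n + β) (hβn : β ≤ n)
    (hnm : n < m) : FSP (Fpair m n) (Hpair m n α β) := by
  have hα : 0 < α := Nat.pos_of_ne_zero (by rintro rfl; omega)
  have hαn : (α - 1) * n + n = α * n := by
    rw [Nat.sub_one_mul, Nat.sub_add_cancel (Nat.le_mul_of_pos_left n hα)]
  obtain ⟨σ, hσ⟩ := exists_perm_val_eq_of_injective (m := m)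
    (blockRotate_injective (β := β) (k := α) hn) fun x hx => blockRotate_lt hn (by omega) hx
  obtain ⟨π, hπ⟩ := exists_perm_val_eq_of_injective (m := n)
    (blockRotate_injective (β := β) (k := α) hn) fun x hx => by
      simpa using (blockRotate_lt_mul_iff (β := β) (k := α) (j := 1) hn).2 (by omega)
  have hH : Hpair m n α β = ((Fpair m n).1.submatrix σ π, (Fpair m n).2.submatrix σ σ) := by
    rw [Hpair, if_neg hnm.not_ge]
    refine Prod.ext ?_ ?_ <;> ext i j <;>
      simp only [submatrix_apply, fpair_fst_apply, fpair_snd_apply, hσ, hπ]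
    · simp only [(blockRotate_injective hn).eq_iff]
    · rw [if_congr (blockRotate_eq_add_iff hn hβn hα (by omega)) rfl rfl]
      split_ifs at * <;> first | rfl | omega
  rw [hH]
  exact fsp_submatrix _ _ _

theorem stmt5_general (m n α β : ℕ) (hn : 1 ≤ n)
    (hdec : m = α * n + β) (hβn : β ≤ n) :
    FSP (Fpair m n) (Hpair m n α β) := by
  rcases le_or_gt m n with hmn | hmn
  · rw [Hpair, if_pos hmn]
    exact fsp_fpair_gmat hn hmn
  · exact fsp_fpair_hpair_of_lt hn hdec hβn hmn

/-- `𝔉_{mn}` and `ℋ_{mn}` are feedback similar. -/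
theorem stmt5 (m n α β : ℕ) (hm : 1 ≤ m) (hn : 1 ≤ n)
    (hdec : m = α * n + β) (hβ0 : 0 < β) (hβn : β ≤ n) :
    FSP (Fpair m n) (Hpair m n α β) :=
  stmt5_general m n α β hn hdec hβn
end

section
/- Let m ≥ 1 and n ≥ 1, and write m = αn + β with integers α ≥ 0 and 0 < β ≤ n. Write ℋ_{mn} = (B₀, A₀). For matrices P ∈ ℂ^{n×n}, S ∈ ℂ^{m×m}, and U ∈ ℂ^{n×m}, the equality [B₀ A₀] · [[P, U],[0, S]] = S · [B₀ A₀] holds if and only if there exist matrices S_1 ∈ ℂ^{(n−β)×(n−β)}, S_3 ∈ ℂ^{β×β}, and S_2, S_4 ∈ ℂ^{(n−β)×β} such that [[P, U],[0, S]] = R_{α+2}(S_1,S_2,S_3,S_4) and S = R_{α+1}(S_1,S_2,S_3,S_4). -/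
open Matrix

/-- Entry of a matrix at natural-number indices, defaulting to `0` out of range. -/
def get' {p q : ℕ} (M : Matrix (Fin p) (Fin q) ℂ) (i j : ℕ) : ℂ :=
  if h : i < p ∧ j < q then M ⟨i, h.1⟩ ⟨j, h.2⟩ else 0

/-- The matrix `R_γ(S₁,S₂,S₃,S₄)` of the paper: square of size `(γ-1)n + β`,
block upper bidiagonal with respect to `γ-1` blocks of size `n` followed by one block of
size `β`; diagonal blocks `[[S₁,S₂],[0,S₃]]` (the last one `S₃`), superdiagonal blocks
`[[0,S₄],[0,0]]` (the last one `[S₄; 0]`). -/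
def Rmat (n β γ : ℕ) (S1 : Matrix (Fin (n - β)) (Fin (n - β)) ℂ)
    (S2 : Matrix (Fin (n - β)) (Fin β) ℂ) (S3 : Matrix (Fin β) (Fin β) ℂ)
    (S4 : Matrix (Fin (n - β)) (Fin β) ℂ) :
    Matrix (Fin ((γ - 1) * n + β)) (Fin ((γ - 1) * n + β)) ℂ := fun t u =>
  let N := n - β
  let bi := if (t:ℕ) < (γ - 1) * n then (t:ℕ) / n else γ - 1
  let bj := if (u:ℕ) < (γ - 1) * n then (u:ℕ) / n else γ - 1
  let p := (t:ℕ) - bi * n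
  let q := (u:ℕ) - bj * n
  if bi = bj then
    if bi = γ - 1 then get' S3 p q
    else if p < N ∧ q < N then get' S1 p q
    else if p < N ∧ N ≤ q then get' S2 p (q - N)
    else if N ≤ p ∧ N ≤ q then get' S3 (p - N) (q - N)
    else 0
  else if bj = bi + 1 then
    if bj = γ - 1 then (if p < N then get' S4 p q else 0)
    else if p < N ∧ N ≤ q then get' S4 p (q - N)
    else 0
  else 0

/-- The block matrix `[B A]` of a pair, of size `m×(n+m)`. -/
def hcat2 {m n : ℕ} (B : Matrix (Fin m) (Fin n) ℂ) (A : Matrix (Fin m) (Fin m) ℂ) :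
    Matrix (Fin m) (Fin (n + m)) ℂ := fun i j =>
  if h : (j:ℕ) < n then B i ⟨j, h⟩ else A i ⟨(j:ℕ) - n, by have := j.isLt; omega⟩

/-- The block matrix `[[P, U], [0, S]]` of size `(n+m)×(n+m)`. -/
def block2 {m n : ℕ} (P : Matrix (Fin n) (Fin n) ℂ) (U : Matrix (Fin n) (Fin m) ℂ)
    (S : Matrix (Fin m) (Fin m) ℂ) : Matrix (Fin (n + m)) (Fin (n + m)) ℂ := fun i j =>
  if hi : (i:ℕ) < n then
    if hj : (j:ℕ) < n then P ⟨i, hi⟩ ⟨j, hj⟩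
    else U ⟨i, hi⟩ ⟨(j:ℕ) - n, by have := j.isLt; omega⟩
  else
    if hj : (j:ℕ) < n then 0
    else S ⟨(i:ℕ) - n, by have := i.isLt; omega⟩ ⟨(j:ℕ) - n, by have := j.isLt; omega⟩

/-!
Write `N = n - β` and let `ψ i = i` for `i < αn`, `ψ i = i + N` otherwise. The matrix
`[B₀ A₀]` has a single `1` in each row `i`, in column `ψ i`, so for `M = [[P, U], [0, S]]` the
equation `[B₀ A₀] M = S [B₀ A₀]` says `M (ψ i) (ψ k) = M (n + i) (n + k)` and `M (ψ i) j = 0` for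
`j` outside the range of `ψ`.

Re-index `M` by inserting `N` empty rows and columns at position `(α + 1) n`, so that its last
block becomes the bottom-right `β × β` corner of a full `n × n` block. In these coordinates
`ψ i ↦ n + i` is the translation by `n`, and the equation says that `M` is invariant under
translation by `n` along the diagonal, with zeros where the translated column leaves the matrix;
`R_γ(S₁, S₂, S₃, S₄)` becomes the corresponding truncation of the infinite block-Toeplitz matrix
with diagonal blocks `[[S₁, S₂], [0, S₃]]` and superdiagonal blocks `[[0, S₄], [0, 0]]`. A
translation-invariant array with zero lower-left block is determined by its first block row:
entries of the first block row outside the Toeplitz pattern vanish because, as they are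
translated down the diagonal, their column leaves the matrix while their row is still inside.
-/

theorem Matrix.one_submatrix_mul_eq_mul_one_submatrix_iff {ι κ R : Type*} [Fintype ι]
    [Fintype κ] [DecidableEq κ] [Semiring R] {ψ : ι → κ} (hψ : Function.Injective ψ)
    (M : Matrix κ κ R) (S : Matrix ι ι R) :
    (1 : Matrix κ κ R).submatrix ψ id * M = S * (1 : Matrix κ κ R).submatrix ψ id ↔
      (∀ i k, M (ψ i) (ψ k) = S i k) ∧ ∀ i j, j ∉ Set.range ψ → M (ψ i) j = 0 := by
  set E := (1 : Matrix κ κ R).submatrix ψ id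
  have hEM : ∀ i j, (E * M) i j = M (ψ i) j := fun i j => by
    simp [E, Matrix.mul_apply, Matrix.one_apply]
  have hSE : ∀ i j, (S * E) i j = ∑ k, if ψ k = j then S i k else 0 := fun i j => by
    simp [E, Matrix.mul_apply, Matrix.one_apply]
  have hSE_range : ∀ i k, (S * E) i (ψ k) = S i k := fun i k => by
    rw [hSE, Fintype.sum_eq_single k fun k' hk' => if_neg (hψ.ne hk'), if_pos rfl]
  have hSE_compl : ∀ i j, j ∉ Set.range ψ → (S * E) i j = 0 := fun i j hj => by
    rw [hSE, Finset.sum_eq_zero fun k _ => if_neg fun hk => hj ⟨k, hk⟩]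
  rw [← Matrix.ext_iff]
  constructor
  · intro h
    exact ⟨fun i k => by rw [← hEM, h, hSE_range], fun i j hj => by rw [← hEM, h, hSE_compl i j hj]⟩
  · rintro ⟨hrange, hcompl⟩ i j
    by_cases hj : j ∈ Set.range ψ
    · obtain ⟨k, rfl⟩ := hj
      rw [hEM, hSE_range, hrange]
    · rw [hEM, hSE_compl i j hj, hcompl i j hj]

namespace CanonicalPair

theorem mul_add_div_right {n a r : ℕ} (hr : r < n) : (a * n + r) / n = a := by
  rw [add_comm, Nat.add_mul_div_right _ _ (by omega), Nat.div_eq_of_lt hr, zero_add]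

theorem mul_add_mod_right {n a r : ℕ} (hr : r < n) : (a * n + r) % n = r := by
  rw [add_comm, Nat.add_mul_mod_self_right, Nat.mod_eq_of_lt hr]

theorem succ_mul_add (a n r : ℕ) : (a + 1) * n + r = a * n + r + n := by ring

theorem exists_eq_mul_add {n : ℕ} (hn : 0 < n) (x : ℕ) : ∃ b p, p < n ∧ x = b * n + p :=
  ⟨x / n, x % n, Nat.mod_lt x hn, (Nat.div_add_mod' x n).symm⟩

/- With `T = K * n`, `insertGap T N` sends the indices `0, …, T + (n - N) - 1` of a matrix made of
`K` blocks of size `n` followed by one block of size `n - N` to virtual indices in full blocks of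
size `n`, the short block occupying the last `n - N` positions of block `K`; `InTrunc n N T` is
its image and `removeGap T N` its inverse. -/
def InTrunc (n N T x : ℕ) : Prop := x < T ∨ T + N ≤ x ∧ x < T + n

def insertGap (T N x : ℕ) : ℕ := if x < T then x else x + N

def removeGap (T N x : ℕ) : ℕ := if x < T then x else x - N

section Gap

variable {n N T : ℕ}

theorem inTrunc_mul_add_iff {K b p : ℕ} (hN : N < n) (hp : p < n) :
    InTrunc n N (K * n) (b * n + p) ↔ b < K ∨ b = K ∧ N ≤ p := by
  unfold InTrunc
  rcases lt_trichotomy b K with h | rfl | h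
  · have : (b + 1) * n ≤ K * n := Nat.mul_le_mul_right n h
    rw [add_one_mul] at this
    omega
  · omega
  · have : (K + 1) * n ≤ b * n := Nat.mul_le_mul_right n h
    rw [add_one_mul] at this
    omega

theorem inTrunc_insertGap {i : ℕ} (hi : i < T + (n - N)) : InTrunc n N T (insertGap T N i) := by
  unfold InTrunc insertGap
  split_ifs <;> omega

theorem inTrunc_insertGap_add_iff {j : ℕ} :
    InTrunc n N T (insertGap (T + n) N j) ↔ InTrunc n N T j := by
  unfold InTrunc insertGap
  split_ifs <;> omega

theorem exists_fin_insertGap {L x : ℕ} (hL : L = T + (n - N)) (hx : InTrunc n N T x) :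
    ∃ i : Fin L, insertGap T N i = x := by
  unfold InTrunc at hx
  refine ⟨⟨removeGap T N x, by unfold removeGap; split_ifs <;> omega⟩, ?_⟩
  show insertGap T N (removeGap T N x) = x
  unfold insertGap removeGap
  split_ifs <;> omega

theorem InTrunc.extend {x : ℕ} (h : InTrunc n N T x) :
    InTrunc n N (T + n) x ∧ InTrunc n N (T + n) (x + n) := by
  unfold InTrunc at *
  omega

theorem removeGap_insertGap (x : ℕ) : removeGap T N (insertGap T N x) = x := by
  unfold removeGap insertGap
  split_ifs <;> omega

theorem removeGap_add_insertGap {i : ℕ} (hi : i < T + (n - N)) :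
    removeGap (T + n) N (insertGap T N i) = insertGap T N i := by
  unfold removeGap insertGap
  split_ifs <;> omega

theorem insertGap_add_add (i : ℕ) : insertGap (T + n) N (n + i) = insertGap T N i + n := by
  unfold insertGap
  split_ifs <;> omega

end Gap

def diagBlock (N : ℕ) (s1 s2 s3 : ℕ → ℕ → ℂ) (p q : ℕ) : ℂ :=
  if p < N then (if q < N then s1 p q else s2 p (q - N))
  else if q < N then 0 else s3 (p - N) (q - N)

def superBlock (N : ℕ) (s4 : ℕ → ℕ → ℂ) (p q : ℕ) : ℂ :=
  if p < N ∧ N ≤ q then s4 p (q - N) else 0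

def blockToeplitz (n N : ℕ) (s1 s2 s3 s4 : ℕ → ℕ → ℂ) (x y : ℕ) : ℂ :=
  if x / n = y / n then diagBlock N s1 s2 s3 (x % n) (y % n)
  else if y / n = x / n + 1 then superBlock N s4 (x % n) (y % n)
  else 0

/- The equation `[B₀ A₀] M = S [B₀ A₀]` in virtual coordinates: `InTrunc n N T` are the
virtual indices of the rows `ψ i`, and `InTrunc n N (T + n)` those of all rows of `M`. -/
structure IsShiftInvariant (n N T : ℕ) (G : ℕ → ℕ → ℂ) : Prop where
  shift : ∀ x y, InTrunc n N T x → InTrunc n N T y → G x y = G (x + n) (y + n)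
  zero : ∀ x y, InTrunc n N T x → InTrunc n N (T + n) y → ¬ InTrunc n N T y → G x y = 0

section BlockToeplitz

variable {n N K : ℕ} {s1 s2 s3 s4 : ℕ → ℕ → ℂ}

theorem blockToeplitz_mul_add {b p c q : ℕ} (hp : p < n) (hq : q < n) :
    blockToeplitz n N s1 s2 s3 s4 (b * n + p) (c * n + q) =
      if b = c then diagBlock N s1 s2 s3 p q
      else if c = b + 1 then superBlock N s4 p q else 0 := by
  simp only [blockToeplitz, mul_add_div_right hp, mul_add_div_right hq, mul_add_mod_right hp,
    mul_add_mod_right hq]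

theorem blockToeplitz_of_lt {p q : ℕ} (hp : p < n) (hq : q < n) :
    blockToeplitz n N s1 s2 s3 s4 p q = diagBlock N s1 s2 s3 p q := by
  simpa using blockToeplitz_mul_add (N := N) (s1 := s1) (s2 := s2) (s3 := s3) (s4 := s4)
    (b := 0) (c := 0) hp hq

theorem blockToeplitz_of_lt_add {p q : ℕ} (hp : p < n) (hq : q < n) :
    blockToeplitz n N s1 s2 s3 s4 p (n + q) = superBlock N s4 p q := by
  simpa [add_comm n q] using blockToeplitz_mul_add (N := N) (s1 := s1) (s2 := s2) (s3 := s3)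
    (s4 := s4) (b := 0) (c := 1) hp hq

theorem blockToeplitz_add_add (x y : ℕ) :
    blockToeplitz n N s1 s2 s3 s4 (x + n) (y + n) = blockToeplitz n N s1 s2 s3 s4 x y := by
  rcases Nat.eq_zero_or_pos n with rfl | hn
  · rfl
  simp only [blockToeplitz, Nat.add_div_right _ hn, Nat.add_mod_right, Nat.add_right_cancel_iff]

theorem blockToeplitz_eq_zero {x y : ℕ} (hx : n ≤ x) (hy : y < n) :
    blockToeplitz n N s1 s2 s3 s4 x y = 0 := by
  have : 1 ≤ x / n := (Nat.one_le_div_iff (by omega)).2 hx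
  simp only [blockToeplitz, Nat.div_eq_of_lt hy]
  rw [if_neg (by omega), if_neg (by omega)]

theorem isShiftInvariant_blockToeplitz (hN : N < n) :
    IsShiftInvariant n N (K * n) (blockToeplitz n N s1 s2 s3 s4) where
  shift x y _ _ := (blockToeplitz_add_add x y).symm
  zero x y hx hy hy' := by
    obtain ⟨b, p, hp, rfl⟩ := exists_eq_mul_add (n := n) (by omega) x
    obtain ⟨c, q, hq, rfl⟩ := exists_eq_mul_add (n := n) (by omega) y
    rw [inTrunc_mul_add_iff hN hp] at hx
    rw [← add_one_mul, inTrunc_mul_add_iff hN hq] at hy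
    rw [inTrunc_mul_add_iff hN hq] at hy'
    rw [blockToeplitz_mul_add hp hq]
    unfold diagBlock superBlock
    split_ifs <;> first | rfl | omega

end BlockToeplitz

theorem get'_of_lt {p q i j : ℕ} (M : Matrix (Fin p) (Fin q) ℂ) (hi : i < p) (hj : j < q) :
    get' M i j = M ⟨i, hi⟩ ⟨j, hj⟩ :=
  dif_pos ⟨hi, hj⟩

theorem get'_val_val {p q : ℕ} (M : Matrix (Fin p) (Fin q) ℂ) (i : Fin p) (j : Fin q) :
    get' M i j = M i j :=
  get'_of_lt M i.isLt j.isLt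

namespace IsShiftInvariant

variable {n N T K : ℕ} {G H : ℕ → ℕ → ℂ}

theorem sub (hG : IsShiftInvariant n N T G) (hH : IsShiftInvariant n N T H) :
    IsShiftInvariant n N T (G - H) where
  shift x y hx hy := by simp only [Pi.sub_apply, hG.shift x y hx hy, hH.shift x y hx hy]
  zero x y hx hy hy' := by
    simp only [Pi.sub_apply, hG.zero x y hx hy hy', hH.zero x y hx hy hy', sub_zero]

theorem congr (hH : IsShiftInvariant n N T H)
    (h : ∀ x y, InTrunc n N (T + n) x → InTrunc n N (T + n) y → G x y = H x y) :
    IsShiftInvariant n N T G where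
  shift x y hx hy := by
    rw [h x y hx.extend.1 hy.extend.1, h _ _ hx.extend.2 hy.extend.2, hH.shift x y hx hy]
  zero x y hx hy hy' := by rw [h x y hx.extend.1 hy, hH.zero x y hx hy hy']

/- Translate the entry down the diagonal until its column leaves the matrix; outside the
Toeplitz pattern its row is still inside at that point, so `zero` applies. -/
theorem mul_add_eq_zero_of_not_pattern (hG : IsShiftInvariant n N (K * n) G) (hN : N < n)
    {b p c q : ℕ} (hp : p < n) (hq : q < n) (hc : c < K + 1 ∨ c = K + 1 ∧ N ≤ q)
    (hbc : b ≤ c) (hdiag : c = b → N ≤ p ∧ q < N) (hsuper : c = b + 1 → N ≤ p ∨ q < N) :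
    G (b * n + p) (c * n + q) = 0 := by
  have hx : InTrunc n N (K * n) (b * n + p) := by
    rw [inTrunc_mul_add_iff hN hp]; omega
  by_cases hy : InTrunc n N (K * n) (c * n + q)
  · rw [hG.shift _ _ hx hy, ← succ_mul_add, ← succ_mul_add]
    rw [inTrunc_mul_add_iff hN hq] at hy
    exact hG.mul_add_eq_zero_of_not_pattern hN hp hq (by omega) (by omega) (by omega) (by omega)
  · refine hG.zero _ _ hx ?_ hy
    rwa [← add_one_mul, inTrunc_mul_add_iff hN hq]
termination_by K + 1 - b

theorem eq_zero_of_first_block_row (hG : IsShiftInvariant n N (K * n) G) (hN : N < n)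
    (hlower : ∀ x y, InTrunc n N ((K + 1) * n) x → n ≤ x → y < n → G x y = 0)
    (hdiag : ∀ p q, p < n → q < n → ¬ (N ≤ p ∧ q < N) → G p q = 0)
    (hsuper : ∀ p q, p < N → N ≤ q → q < n → G p (n + q) = 0)
    {x y : ℕ} (hx : InTrunc n N ((K + 1) * n) x) (hy : InTrunc n N ((K + 1) * n) y) :
    G x y = 0 := by
  obtain ⟨b, p, hp, rfl⟩ := exists_eq_mul_add (n := n) (by omega) x
  obtain ⟨c, q, hq, rfl⟩ := exists_eq_mul_add (n := n) (by omega) y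
  rw [inTrunc_mul_add_iff hN hp] at hx
  rw [inTrunc_mul_add_iff hN hq] at hy
  induction b generalizing c with
  | zero =>
    rw [zero_mul, zero_add]
    by_cases hgen : c = 0 ∧ ¬ (N ≤ p ∧ q < N) ∨ c = 1 ∧ p < N ∧ N ≤ q
    · rcases hgen with ⟨rfl, h⟩ | ⟨rfl, h⟩
      · simpa using hdiag p q hp hq h
      · simpa using hsuper p q h.1 h.2 hq
    · simpa using hG.mul_add_eq_zero_of_not_pattern hN (b := 0) hp hq hy (by omega) (by omega)
        (by omega)
  | succ b ih =>
    cases c with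
    | zero =>
      exact hlower _ _ ((inTrunc_mul_add_iff hN hp).2 hx) (by rw [succ_mul_add]; omega)
        (by omega)
    | succ c =>
      rw [← ih (by omega) c (by omega), succ_mul_add, succ_mul_add]
      refine (hG.shift _ _ ?_ ?_).symm
      · rw [inTrunc_mul_add_iff hN hp]; omega
      · rw [inTrunc_mul_add_iff hN hq]; omega

/- `G` minus the block-Toeplitz array of its first block row is again shift invariant, and it
vanishes below the first block column and on the Toeplitz pattern of the first block row. -/
theorem eq_blockToeplitz {s1 s2 s3 s4 : ℕ → ℕ → ℂ} (hG : IsShiftInvariant n N (K * n) G)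
    (hN : N < n) (hlower : ∀ x y, InTrunc n N ((K + 1) * n) x → n ≤ x → y < n → G x y = 0)
    (hs1 : ∀ p q, p < N → q < N → s1 p q = G p q)
    (hs2 : ∀ p q, p < N → q < n - N → s2 p q = G p (N + q))
    (hs3 : ∀ p q, p < n - N → q < n - N → s3 p q = G (N + p) (N + q))
    (hs4 : ∀ p q, p < N → q < n - N → s4 p q = G p (n + N + q))
    {x y : ℕ} (hx : InTrunc n N ((K + 1) * n) x) (hy : InTrunc n N ((K + 1) * n) y) :
    G x y = blockToeplitz n N s1 s2 s3 s4 x y := by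
  refine sub_eq_zero.1 ((hG.sub (isShiftInvariant_blockToeplitz hN)).eq_zero_of_first_block_row
    hN ?_ ?_ ?_ hx hy)
  · intro x y hx hxn hy
    rw [Pi.sub_apply, Pi.sub_apply, hlower x y hx hxn hy, blockToeplitz_eq_zero hxn hy, sub_zero]
  · intro p q hp hq hpq
    rw [Pi.sub_apply, Pi.sub_apply, blockToeplitz_of_lt hp hq, sub_eq_zero, diagBlock]
    split_ifs with h1 h2 h2
    · exact (hs1 p q h1 h2).symm
    · rw [hs2 p (q - N) h1 (by omega), Nat.add_sub_cancel' (by omega)]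
    · omega
    · rw [hs3 (p - N) (q - N) (by omega) (by omega), Nat.add_sub_cancel' (by omega),
        Nat.add_sub_cancel' (by omega)]
  · intro p q hp hNq hq
    rw [Pi.sub_apply, Pi.sub_apply, blockToeplitz_of_lt_add (by omega) hq, sub_eq_zero,
      superBlock, if_pos ⟨hp, hNq⟩, hs4 p (q - N) hp (by omega), add_assoc,
      Nat.add_sub_cancel' hNq]

theorem exists_eq_blockToeplitz {β : ℕ} (hG : IsShiftInvariant n (n - β) (K * n) G)
    (hβ : 0 < β) (hβn : β ≤ n)
    (hlower : ∀ x y, InTrunc n (n - β) ((K + 1) * n) x → n ≤ x → y < n → G x y = 0) :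
    ∃ (S1 : Matrix (Fin (n - β)) (Fin (n - β)) ℂ) (S2 S4 : Matrix (Fin (n - β)) (Fin β) ℂ)
      (S3 : Matrix (Fin β) (Fin β) ℂ), ∀ x y, InTrunc n (n - β) ((K + 1) * n) x →
        InTrunc n (n - β) ((K + 1) * n) y →
        G x y = blockToeplitz n (n - β) (get' S1) (get' S2) (get' S3) (get' S4) x y :=
  ⟨.of fun p q => G p q, .of fun p q => G p (n - β + q), .of fun p q => G p (n + (n - β) + q),
    .of fun p q => G (n - β + p) (n - β + q), fun _ _ => hG.eq_blockToeplitz (by omega) hlower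
    (fun _ _ hp hq => get'_of_lt _ hp hq) (fun _ _ hp hq => get'_of_lt _ hp (by omega))
    (fun _ _ hp hq => get'_of_lt _ (by omega) (by omega))
    (fun _ _ hp hq => get'_of_lt _ hp (by omega))⟩

end IsShiftInvariant

def virtualEntry {L : ℕ} (T N : ℕ) (M : Matrix (Fin L) (Fin L) ℂ) (x y : ℕ) : ℂ :=
  get' M (removeGap T N x) (removeGap T N y)

theorem virtualEntry_eq_apply {L T N x y : ℕ} (M : Matrix (Fin L) (Fin L) ℂ) {i j : Fin L}
    (hi : removeGap T N x = i) (hj : removeGap T N y = j) : virtualEntry T N M x y = M i j := by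
  rw [virtualEntry, hi, hj, get'_val_val]

section Block2

variable {m n : ℕ} (P : Matrix (Fin n) (Fin n) ℂ) (U : Matrix (Fin n) (Fin m) ℂ)
  (S : Matrix (Fin m) (Fin m) ℂ)

theorem block2_natAdd_natAdd (i k : Fin m) :
    block2 P U S (Fin.natAdd n i) (Fin.natAdd n k) = S i k := by
  simp [block2]

theorem get'_block2_eq_zero {x y : ℕ} (hx : n ≤ x) (hy : y < n) : get' (block2 P U S) x y = 0 := by
  unfold get'
  split_ifs
  · simp [block2, not_lt.2 hx, hy]
  · rfl

theorem virtualEntry_block2_eq_zero {T N x y : ℕ} (hT : n ≤ T) (hx : InTrunc n N T x)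
    (hxn : n ≤ x) (hy : y < n) : virtualEntry T N (block2 P U S) x y = 0 := by
  unfold virtualEntry
  apply get'_block2_eq_zero
  · unfold removeGap InTrunc at *; split_ifs <;> omega
  · unfold removeGap; split_ifs <;> omega

end Block2

def hcatIndex (n α β : ℕ) {m : ℕ} (i : Fin m) : Fin (n + m) :=
  ⟨insertGap (α * n) (n - β) i, by unfold insertGap; split_ifs <;> omega⟩

theorem hcatIndex_injective {n α β m : ℕ} : Function.Injective (hcatIndex n α β (m := m)) := by
  intro i k h
  have := congrArg (removeGap (α * n) (n - β)) (Fin.ext_iff.1 h)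
  simpa only [hcatIndex, removeGap_insertGap, Fin.ext_iff] using this

theorem mem_range_hcatIndex_iff {m n α β : ℕ} (hm : m = α * n + β) (hβn : β ≤ n)
    (j : Fin (n + m)) : j ∈ Set.range (hcatIndex n α β) ↔ InTrunc n (n - β) (α * n) j := by
  constructor
  · rintro ⟨k, rfl⟩
    exact inTrunc_insertGap (by omega)
  · intro hj
    obtain ⟨k, hk⟩ := exists_fin_insertGap (L := m) (by omega) hj
    exact ⟨k, Fin.ext hk⟩

theorem hcat2_Hpair_eq_one_submatrix {m n α β : ℕ} (hm : m = α * n + β) (hβ : 0 < β)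
    (hβn : β ≤ n) :
    hcat2 (Hpair m n α β).1 (Hpair m n α β).2 =
      (1 : Matrix (Fin (n + m)) (Fin (n + m)) ℂ).submatrix (hcatIndex n α β) id := by
  ext i k
  have := i.isLt
  have := Nat.sub_add_cancel hβn
  simp only [Matrix.submatrix_apply, Matrix.one_apply, hcatIndex, insertGap, Fin.ext_iff, id,
    hcat2, Hpair]
  cases α with
  | zero =>
    simp only [zero_mul, zero_add] at hm ⊢
    simp only [hm, hβn, if_true, Gmat]
    split_ifs <;> first | rfl | omega
  | succ a =>
    have : (a + 1) * n = a * n + n := add_one_mul a n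
    simp only [show ¬ m ≤ n by omega, if_false, Nat.add_sub_cancel]
    split_ifs <;> first | rfl | omega

theorem isShiftInvariant_virtualEntry_iff {m n α β : ℕ} (hm : m = α * n + β) (hβn : β ≤ n)
    (P : Matrix (Fin n) (Fin n) ℂ) (U : Matrix (Fin n) (Fin m) ℂ) (S : Matrix (Fin m) (Fin m) ℂ) :
    IsShiftInvariant n (n - β) (α * n) (virtualEntry ((α + 1) * n) (n - β) (block2 P U S)) ↔
      (∀ i k, block2 P U S (hcatIndex n α β i) (hcatIndex n α β k) = S i k) ∧
      ∀ i j, j ∉ Set.range (hcatIndex n α β) → block2 P U S (hcatIndex n α β i) j = 0 := by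
  rw [add_one_mul]
  have hψ : ∀ i : Fin m, removeGap (α * n + n) (n - β) (insertGap (α * n) (n - β) i) =
      hcatIndex n α β i := fun i => removeGap_add_insertGap (by omega)
  have hσ : ∀ i : Fin m, removeGap (α * n + n) (n - β) (insertGap (α * n) (n - β) i + n) =
      Fin.natAdd n i := fun i => by
    rw [Fin.val_natAdd, ← insertGap_add_add, removeGap_insertGap]
  constructor
  · intro h
    refine ⟨fun i k => ?_, fun i j hj => ?_⟩
    · have := h.shift _ _ (inTrunc_insertGap (i := i) (by omega))
        (inTrunc_insertGap (i := k) (by omega))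
      rwa [virtualEntry_eq_apply _ (hψ i) (hψ k), virtualEntry_eq_apply _ (hσ i) (hσ k),
        block2_natAdd_natAdd] at this
    · rw [mem_range_hcatIndex_iff hm hβn, ← inTrunc_insertGap_add_iff] at hj
      have := h.zero _ _ (inTrunc_insertGap (i := i) (by omega)) (inTrunc_insertGap (by omega)) hj
      rwa [virtualEntry_eq_apply _ (hψ i) (removeGap_insertGap _)] at this
  · rintro ⟨hshift, hzero⟩
    constructor
    · intro x y hx hy
      obtain ⟨i, rfl⟩ := exists_fin_insertGap (L := m) (by omega) hx
      obtain ⟨k, rfl⟩ := exists_fin_insertGap (L := m) (by omega) hy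
      rw [virtualEntry_eq_apply _ (hψ i) (hψ k), virtualEntry_eq_apply _ (hσ i) (hσ k),
        block2_natAdd_natAdd]
      exact hshift i k
    · intro x y hx hy hy'
      obtain ⟨i, rfl⟩ := exists_fin_insertGap (L := m) (by omega) hx
      obtain ⟨j, rfl⟩ := exists_fin_insertGap (L := n + m) (by omega) hy
      rw [virtualEntry_eq_apply _ (hψ i) (removeGap_insertGap _)]
      exact hzero i j (by rwa [mem_range_hcatIndex_iff hm hβn, ← inTrunc_insertGap_add_iff])

/- `b` and `t - b * n` are the block index and the offset computed in `Rmat`. -/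
theorem exists_insertGap_eq_mul_add {n β K t : ℕ} (hβ : β ≤ n) (ht : t < K * n + β) :
    ∃ b r, r < n ∧ insertGap (K * n) (n - β) t = b * n + r ∧
      (if t < K * n then t / n else K) = b ∧ t - b * n = (if b = K then r - (n - β) else r) ∧
      (b < K ∨ b = K ∧ n - β ≤ r) := by
  by_cases h : t < K * n
  · have hn : 0 < n := Nat.pos_of_ne_zero (by rintro rfl; simp at h)
    have hb : t / n < K := (Nat.div_lt_iff_lt_mul hn).2 h
    refine ⟨t / n, t % n, Nat.mod_lt t hn, ?_, if_pos h, ?_, Or.inl hb⟩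
    · rw [insertGap, if_pos h, Nat.div_add_mod']
    · rw [if_neg hb.ne]; have := Nat.div_add_mod' t n; omega
  · refine ⟨K, t - K * n + (n - β), by omega, ?_, if_neg h, ?_, Or.inr ⟨rfl, by omega⟩⟩
    · rw [insertGap, if_neg h]; omega
    · rw [if_pos rfl]; omega

section Rmat

variable {n β K : ℕ} {S1 : Matrix (Fin (n - β)) (Fin (n - β)) ℂ}
  {S2 S4 : Matrix (Fin (n - β)) (Fin β) ℂ} {S3 : Matrix (Fin β) (Fin β) ℂ}

theorem Rmat_apply (hβ : β ≤ n) (t u : Fin ((K + 1 - 1) * n + β)) :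
    Rmat n β (K + 1) S1 S2 S3 S4 t u =
      blockToeplitz n (n - β) (get' S1) (get' S2) (get' S3) (get' S4)
        (insertGap (K * n) (n - β) t) (insertGap (K * n) (n - β) u) := by
  obtain ⟨b, r, hr, hbt, hb, hr', hbK⟩ := exists_insertGap_eq_mul_add (K := K) hβ t.isLt
  obtain ⟨c, s, hs, hcu, hc, hs', hcK⟩ := exists_insertGap_eq_mul_add (K := K) hβ u.isLt
  rw [hbt, hcu, blockToeplitz_mul_add hr hs]
  simp only [Rmat, Nat.add_sub_cancel, hb, hc, hr', hs']
  unfold diagBlock superBlock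
  split_ifs <;> first | rfl | omega

theorem reindex_Rmat_apply (hβ : β ≤ n) {L : ℕ} (h : (K + 1 - 1) * n + β = L) (t u : Fin L) :
    Matrix.reindex (finCongr h) (finCongr h) (Rmat n β (K + 1) S1 S2 S3 S4) t u =
      blockToeplitz n (n - β) (get' S1) (get' S2) (get' S3) (get' S4)
        (insertGap (K * n) (n - β) t) (insertGap (K * n) (n - β) u) := by
  simp [Rmat_apply hβ]

end Rmat

end CanonicalPair

open CanonicalPair

/-- Theorem 6(b) of the paper: description of the endomorphisms of the
canonical pair `ℋ_{mn}`. -/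
theorem stmt6 (m n α β : ℕ)
    (hdec : m = α * n + β) (hβ0 : 0 < β) (hβn : β ≤ n)
    (P : Matrix (Fin n) (Fin n) ℂ) (S : Matrix (Fin m) (Fin m) ℂ)
    (U : Matrix (Fin n) (Fin m) ℂ) :
    hcat2 (Hpair m n α β).1 (Hpair m n α β).2 * block2 P U S =
        S * hcat2 (Hpair m n α β).1 (Hpair m n α β).2 ↔
      ∃ (S1 : Matrix (Fin (n - β)) (Fin (n - β)) ℂ)
        (S2 S4 : Matrix (Fin (n - β)) (Fin β) ℂ) (S3 : Matrix (Fin β) (Fin β) ℂ),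
        block2 P U S =
          Matrix.reindex
            (finCongr (show (α + 2 - 1) * n + β = n + m by
              have e1 : (α + 2 - 1) * n = α * n + n := by
                rw [show α + 2 - 1 = α + 1 from rfl]; ring
              omega))
            (finCongr (show (α + 2 - 1) * n + β = n + m by
              have e1 : (α + 2 - 1) * n = α * n + n := by
                rw [show α + 2 - 1 = α + 1 from rfl]; ring
              omega))
            (Rmat n β (α + 2) S1 S2 S3 S4) ∧
        S =
          Matrix.reindex
            (finCongr (show (α + 1 - 1) * n + β = m by
              have e1 : (α + 1 - 1) * n = α * n := by
                rw [show α + 1 - 1 = α from rfl]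
              omega))
            (finCongr (show (α + 1 - 1) * n + β = m by
              have e1 : (α + 1 - 1) * n = α * n := by
                rw [show α + 1 - 1 = α from rfl]
              omega))
            (Rmat n β (α + 1) S1 S2 S3 S4) := by
  have hT : (α + 1) * n = α * n + n := add_one_mul α n
  rw [hcat2_Hpair_eq_one_submatrix hdec hβ0 hβn,
    Matrix.one_submatrix_mul_eq_mul_one_submatrix_iff hcatIndex_injective,
    ← isShiftInvariant_virtualEntry_iff hdec hβn]
  constructor
  · intro h
    obtain ⟨S1, S2, S4, S3, hG⟩ := h.exists_eq_blockToeplitz hβ0 hβn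
      fun x y hx => virtualEntry_block2_eq_zero P U S (by omega) hx
    have hM : ∀ t u, block2 P U S t u = blockToeplitz n (n - β) (get' S1) (get' S2) (get' S3)
        (get' S4) (insertGap ((α + 1) * n) (n - β) t) (insertGap ((α + 1) * n) (n - β) u) :=
      fun t u => by
        rw [← hG _ _ (inTrunc_insertGap (by omega)) (inTrunc_insertGap (by omega)),
          virtualEntry_eq_apply _ (removeGap_insertGap _) (removeGap_insertGap _)]
    refine ⟨S1, S2, S4, S3, Matrix.ext fun t u => ?_, Matrix.ext fun t u => ?_⟩
    · rw [hM, reindex_Rmat_apply hβn]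
    · rw [← block2_natAdd_natAdd P U S, hM, reindex_Rmat_apply hβn, Fin.val_natAdd,
        Fin.val_natAdd, hT, insertGap_add_add, insertGap_add_add, blockToeplitz_add_add]
  · rintro ⟨S1, S2, S4, S3, hM, -⟩
    refine (isShiftInvariant_blockToeplitz (s1 := get' S1) (s2 := get' S2) (s3 := get' S3)
      (s4 := get' S4) (by omega)).congr fun x y hx hy => ?_
    rw [← hT] at hx hy
    obtain ⟨t, rfl⟩ := exists_fin_insertGap (L := n + m) (by omega) hx
    obtain ⟨u, rfl⟩ := exists_fin_insertGap (L := n + m) (by omega) hy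
    rw [virtualEntry_eq_apply _ (removeGap_insertGap _) (removeGap_insertGap _), hM,
      reindex_Rmat_apply hβn]
end

section
/- Let m ≥ 2 and let (C,B,A) be an m×(1,m,m) triple. For every ε > 0 there exist an m×(1,m,m) triple Δ with ‖Δ‖ < ε and a matrix M ∈ ℂ^{(m−1)×m} such that (C,B,A) + Δ is feedback similar to the triple (e_1, L_m, [0_{1,m}; M]), where e_1 = [1,0,…,0]^T ∈ ℂ^{m×1}, L_m is the m×m matrix with ones on the first subdiagonal and zeros elsewhere, and [0_{1,m}; M] is the m×m matrix whose first row is zero and whose remaining rows form M. -/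
/-!
A single-input pair `(C, B)` is brought to `(e₁, L_m)` modulo the first row as soon as its
controllability matrix `K = [C, BC, …, B^{m-1}C]` is invertible: if `q` is the last row of `K⁻¹`,
then `q B^k C = δ_{k,m-1}` for `k < m`, so the matrix `T` with rows `q B^{m-1}, …, q B, q`
satisfies `T C = e₁`, `T K` is unitriangular, and right multiplication by `B` shifts the rows of
`T`. Hence `T B T⁻¹` agrees with `L_m` outside the first row; the feedback terms `C V` and `C U`
only change the first row and are chosen to clear it (in `T A T⁻¹` as well).

Invertibility of `K` is reached by a small perturbation: along the segment from `(C, B)` to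
`(e₁, L_m)`, `det K` is a polynomial in the parameter which equals `1` at the endpoint, so it
has only finitely many roots and small real parameters avoiding them exist.
-/

open Matrix


namespace Matrix

variable {R : Type*}

def firstUnitColumn [Zero R] [One R] (m : ℕ) : Matrix (Fin m) (Fin 1) R :=
  fun i _ => if (i : ℕ) = 0 then 1 else 0

def lowerShift [Zero R] [One R] (m : ℕ) : Matrix (Fin m) (Fin m) R :=
  fun i j => if (i : ℕ) = (j : ℕ) + 1 then 1 else 0

def prependZeroRow [Zero R] {m : ℕ} (M : Matrix (Fin (m - 1)) (Fin m) R) :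
    Matrix (Fin m) (Fin m) R :=
  fun i j => if h : (i : ℕ) = 0 then 0 else M ⟨(i : ℕ) - 1, by omega⟩ j

def ctrbMatrix [CommRing R] {m : ℕ} (B : Matrix (Fin m) (Fin m) R)
    (C : Matrix (Fin m) (Fin 1) R) : Matrix (Fin m) (Fin m) R :=
  of fun i j => (B ^ (j : ℕ) * C) i 0

section Controllability

variable [CommRing R] {m : ℕ} (B : Matrix (Fin m) (Fin m) R) (C : Matrix (Fin m) (Fin 1) R)

theorem mul_ctrbMatrix_apply {k : ℕ} (X : Matrix (Fin k) (Fin m) R) (i : Fin k) (j : Fin m) :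
    (X * ctrbMatrix B C) i j = (X * (B ^ (j : ℕ) * C)) i 0 := by
  simp only [mul_apply, ctrbMatrix, of_apply]

theorem map_ctrbMatrix {S : Type*} [CommRing S] (f : R →+* S) :
    (ctrbMatrix B C).map f = ctrbMatrix (B.map f) (C.map f) := by
  ext i j
  change f ((B ^ (j : ℕ) * C) i 0) = (B.map f ^ (j : ℕ) * C.map f) i 0
  rw [← Matrix.map_pow, ← Matrix.map_mul, map_apply]

theorem ctrbMatrix_lowerShift_firstUnitColumn :
    ctrbMatrix (lowerShift m) (firstUnitColumn m) = (1 : Matrix (Fin m) (Fin m) R) := by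
  suffices h : ∀ k < m, ∀ i : Fin m, ((lowerShift m : Matrix (Fin m) (Fin m) R) ^ k *
      (firstUnitColumn m : Matrix (Fin m) (Fin 1) R) : Matrix (Fin m) (Fin 1) R) i 0
      = if (i : ℕ) = k then (1 : R) else 0 by
    ext i j
    simp [ctrbMatrix, h j j.isLt, one_apply, Fin.ext_iff]
  intro k hk i
  induction k generalizing i with
  | zero => simp [firstUnitColumn]
  | succ k ih =>
    rw [pow_succ', Matrix.mul_assoc, mul_apply, Finset.sum_eq_single ⟨k, by omega⟩]
    · simp [lowerShift, ih (by omega)]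
    · intro l _ hl
      simp [ih (by omega), Fin.ext_iff.not.mp hl]
    · simp

end Controllability

noncomputable def ctrbTransform [CommRing R] {n : ℕ} (B : Matrix (Fin (n + 1)) (Fin (n + 1)) R)
    (C : Matrix (Fin (n + 1)) (Fin 1) R) : Matrix (Fin (n + 1)) (Fin (n + 1)) R :=
  of fun i => ((ctrbMatrix B C)⁻¹ * B ^ (n - i)) (Fin.last n)

section CtrbTransform

variable [CommRing R] {n : ℕ} {B : Matrix (Fin (n + 1)) (Fin (n + 1)) R}
  {C : Matrix (Fin (n + 1)) (Fin 1) R}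

theorem inv_ctrbMatrix_mul_pow_mul_apply_last (hK : IsUnit (ctrbMatrix B C).det) {k : ℕ}
    (hk : k ≤ n) :
    ((ctrbMatrix B C)⁻¹ * (B ^ k * C)) (Fin.last n) 0 = if k = n then 1 else 0 := by
  have h := congr_fun (congr_fun (nonsing_inv_mul _ hK) (Fin.last n)) ⟨k, by omega⟩
  rw [mul_ctrbMatrix_apply] at h
  simpa [one_apply, Fin.ext_iff, eq_comm] using h

theorem ctrbTransform_mul_apply {k : ℕ} (X : Matrix (Fin (n + 1)) (Fin k) R) (i : Fin (n + 1))
    (j : Fin k) :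
    (ctrbTransform B C * X) i j = ((ctrbMatrix B C)⁻¹ * B ^ (n - i) * X) (Fin.last n) j := by
  simp only [mul_apply, ctrbTransform, of_apply]

theorem ctrbTransform_mul_self (hK : IsUnit (ctrbMatrix B C).det) :
    ctrbTransform B C * C = firstUnitColumn (n + 1) := by
  ext i j
  rw [Subsingleton.elim j 0, ctrbTransform_mul_apply, Matrix.mul_assoc,
    inv_ctrbMatrix_mul_pow_mul_apply_last hK (Nat.sub_le n i)]
  simp only [firstUnitColumn]
  congr 1
  grind

theorem ctrbTransform_mul_ctrbMatrix_apply (hK : IsUnit (ctrbMatrix B C).det)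
    {i j : Fin (n + 1)} (hji : j ≤ i) :
    (ctrbTransform B C * ctrbMatrix B C) i j = if i = j then 1 else 0 := by
  rw [ctrbTransform_mul_apply, mul_ctrbMatrix_apply, Matrix.mul_assoc,
    ← Matrix.mul_assoc (B ^ _), ← pow_add,
    inv_ctrbMatrix_mul_pow_mul_apply_last hK (by omega)]
  congr 1
  grind

theorem isUnit_det_ctrbTransform (hK : IsUnit (ctrbMatrix B C).det) :
    IsUnit (ctrbTransform B C).det := by
  have hTK : (ctrbTransform B C * ctrbMatrix B C).det = 1 := by
    rw [det_of_isUpperTriangular]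
    · exact Finset.prod_eq_one fun i _ => by
        rw [ctrbTransform_mul_ctrbMatrix_apply hK le_rfl, if_pos rfl]
    · intro i j (hji : j < i)
      rw [ctrbTransform_mul_ctrbMatrix_apply hK hji.le, if_neg hji.ne']
  rw [det_mul] at hTK
  exact IsUnit.of_mul_eq_one _ hTK

theorem ctrbTransform_conj_apply (hK : IsUnit (ctrbMatrix B C).det) {i : Fin (n + 1)}
    (hi : (i : ℕ) ≠ 0) (j : Fin (n + 1)) :
    (ctrbTransform B C * B * (ctrbTransform B C)⁻¹) i j = lowerShift (n + 1) i j := by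
  have hrow : n - i + 1 = n - (i - 1 : ℕ) := by omega
  rw [Matrix.mul_assoc, ctrbTransform_mul_apply, ← Matrix.mul_assoc, Matrix.mul_assoc _ _ B,
    ← pow_succ, hrow, ← ctrbTransform_mul_apply (i := ⟨i - 1, by omega⟩),
    mul_nonsing_inv _ (isUnit_det_ctrbTransform hK), one_apply, lowerShift]
  congr 1
  grind

end CtrbTransform

theorem add_firstUnitColumn_mul_neg_transpose_mul [Ring R] {m : ℕ}
    (Y : Matrix (Fin m) (Fin m) R) :
    Y + (firstUnitColumn m : Matrix (Fin m) (Fin 1) R) *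
        -((firstUnitColumn m : Matrix (Fin m) (Fin 1) R)ᵀ * Y)
      = of fun i j : Fin m => if (i : ℕ) = 0 then 0 else Y i j := by
  ext i j
  have hrow : ((firstUnitColumn m : Matrix (Fin m) (Fin 1) R)ᵀ * Y) 0 j = Y ⟨0, i.pos⟩ j := by
    rw [mul_apply, Finset.sum_eq_single ⟨0, i.pos⟩] <;>
      simp +contextual [firstUnitColumn, Fin.ext_iff]
  rw [of_apply, add_apply, mul_apply, Fin.sum_univ_one, neg_apply, hrow]
  by_cases hi : (i : ℕ) = 0
  · simp [firstUnitColumn, show i = ⟨0, i.pos⟩ from Fin.ext hi]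
  · simp [firstUnitColumn, hi]

theorem map_eval_map_C_add_X_smul [CommRing R] {p q : ℕ} (X Y : Matrix (Fin p) (Fin q) R)
    (t : R) :
    (X.map Polynomial.C + (Polynomial.X : Polynomial R) • (Y - X).map Polynomial.C).map
      (Polynomial.evalRingHom t) = X + t • (Y - X) := by
  ext i j
  simp

end Matrix

theorem exists_FST_normalForm_of_conj {m : ℕ} (C : Matrix (Fin m) (Fin 1) ℂ)
    (B A T : Matrix (Fin m) (Fin m) ℂ) (hT : IsUnit T.det) (hC : T * C = firstUnitColumn m)
    (hB : ∀ i j : Fin m, (i : ℕ) ≠ 0 → (T * B * T⁻¹) i j = lowerShift m i j) :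
    ∃ M : Matrix (Fin (m - 1)) (Fin m) ℂ,
      FST (C, B, A) (firstUnitColumn m, lowerShift m, prependZeroRow M) := by
  set e : Matrix (Fin m) (Fin 1) ℂ := firstUnitColumn m
  have hfeedback : ∀ X : Matrix (Fin m) (Fin m) ℂ, T⁻¹⁻¹ * (X * T⁻¹ + C * -(eᵀ * (T * X * T⁻¹)))
      = T * X * T⁻¹ + e * -(eᵀ * (T * X * T⁻¹)) := by
    intro X
    rw [nonsing_inv_nonsing_inv T hT, Matrix.mul_add, ← Matrix.mul_assoc, ← Matrix.mul_assoc,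
      hC]
  refine ⟨fun i j => (T * A * T⁻¹) ⟨i + 1, by omega⟩ j, T⁻¹, 1, -(eᵀ * (T * A * T⁻¹)),
    -(eᵀ * (T * B * T⁻¹)), (isUnit_iff_isUnit_det _).mpr (isUnit_nonsing_inv_det T hT),
    isUnit_one, ?_, ?_, ?_⟩
  · rw [nonsing_inv_nonsing_inv T hT, Matrix.mul_one, hC]
  · ext i j
    rw [hfeedback, add_firstUnitColumn_mul_neg_transpose_mul, of_apply]
    split_ifs with hi
    · simp [lowerShift, hi]
    · exact (hB i j hi).symm
  · ext i j
    rw [hfeedback, add_firstUnitColumn_mul_neg_transpose_mul, of_apply]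
    simp only [prependZeroRow]
    split_ifs with hi
    · rfl
    · rw [show (⟨i - 1 + 1, by omega⟩ : Fin m) = i from Fin.ext (by simp only; omega)]

theorem exists_FST_normalForm_of_isUnit_det_ctrbMatrix {m : ℕ} (hm : 0 < m)
    (C : Matrix (Fin m) (Fin 1) ℂ) (B A : Matrix (Fin m) (Fin m) ℂ)
    (hK : IsUnit (ctrbMatrix B C).det) :
    ∃ M : Matrix (Fin (m - 1)) (Fin m) ℂ,
      FST (C, B, A) (firstUnitColumn m, lowerShift m, prependZeroRow M) := by
  obtain ⟨n, rfl⟩ : ∃ n, m = n + 1 := ⟨m - 1, by omega⟩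
  exact exists_FST_normalForm_of_conj C B A (ctrbTransform B C) (isUnit_det_ctrbTransform hK)
    (ctrbTransform_mul_self hK) fun i j hi => ctrbTransform_conj_apply hK hi j

theorem Polynomial.exists_pos_lt_eval_ofReal_ne_zero {p : Polynomial ℂ} (hp : p ≠ 0) {δ : ℝ}
    (hδ : 0 < δ) : ∃ t : ℝ, 0 < t ∧ t < δ ∧ p.eval (t : ℂ) ≠ 0 := by
  have hs : ((↑) '' Set.Ioo 0 δ : Set ℂ).Infinite :=
    (Set.Ioo_infinite hδ).image Complex.ofReal_injective.injOn
  obtain ⟨_, ⟨t, ht, rfl⟩, hroot⟩ := (hs.sdiff (finite_setOfPred_isRoot hp)).nonempty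
  exact ⟨t, ht.1, ht.2, hroot⟩

theorem fnorm_smul {p q : ℕ} (z : ℂ) (M : Matrix (Fin p) (Fin q) ℂ) :
    fnorm (z • M) = ‖z‖ * fnorm M := by
  simp_rw [fnorm, Matrix.smul_apply, smul_eq_mul, norm_mul, mul_pow, ← Finset.mul_sum]
  rw [Real.sqrt_mul (by positivity), Real.sqrt_sq (norm_nonneg z)]

theorem exists_small_isUnit_det_ctrbMatrix_add {m : ℕ} (C : Matrix (Fin m) (Fin 1) ℂ)
    (B : Matrix (Fin m) (Fin m) ℂ) {ε : ℝ} (hε : 0 < ε) :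
    ∃ (ΔC : Matrix (Fin m) (Fin 1) ℂ) (ΔB : Matrix (Fin m) (Fin m) ℂ),
      fnorm ΔC + fnorm ΔB < ε ∧ IsUnit (ctrbMatrix (B + ΔB) (C + ΔC)).det := by
  set E : Matrix (Fin m) (Fin 1) ℂ := firstUnitColumn m
  set L : Matrix (Fin m) (Fin m) ℂ := lowerShift m
  set f : Polynomial ℂ :=
    (ctrbMatrix (B.map Polynomial.C + (Polynomial.X : Polynomial ℂ) • (L - B).map Polynomial.C)
      (C.map Polynomial.C + (Polynomial.X : Polynomial ℂ) • (E - C).map Polynomial.C)).det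
  have hf : ∀ t : ℂ, f.eval t = (ctrbMatrix (B + t • (L - B)) (C + t • (E - C))).det := by
    intro t
    rw [← Polynomial.coe_evalRingHom, RingHom.map_det, RingHom.mapMatrix_apply, map_ctrbMatrix,
      map_eval_map_C_add_X_smul, map_eval_map_C_add_X_smul]
  have hf0 : f ≠ 0 := fun h => by
    simpa [h, E, L, ctrbMatrix_lowerShift_firstUnitColumn] using hf 1
  set a := fnorm (L - B) + fnorm (E - C)
  have ha : 0 < a + 1 := by simp only [a, fnorm]; positivity
  obtain ⟨t, ht0, htε, hft⟩ := Polynomial.exists_pos_lt_eval_ofReal_ne_zero hf0 (div_pos hε ha)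
  refine ⟨(t : ℂ) • (E - C), (t : ℂ) • (L - B), ?_, ?_⟩
  · rw [fnorm_smul, fnorm_smul, Complex.norm_real, Real.norm_of_nonneg ht0.le]
    rw [lt_div_iff₀ ha] at htε
    nlinarith
  · exact isUnit_iff_ne_zero.mpr (hf t ▸ hft)

/-- first part of Theorem 9 of the paper: each `m×(1,m,m)` triple,
`m ≥ 2`, reduces by an arbitrarily small perturbation to a triple that is feedback similar
to `(e₁, L_m, [0_{1,m}; M])` for some `M ∈ ℂ^{(m-1)×m}`. -/
theorem stmt9 (m : ℕ) (hm : 2 ≤ m) (T : TripleT m 1) (ε : ℝ) (hε : 0 < ε) :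
    ∃ (Δ : TripleT m 1) (M : Matrix (Fin (m - 1)) (Fin m) ℂ),
      tnorm Δ < ε ∧
      FST (T + Δ)
        ((fun i _ => if (i:ℕ) = 0 then 1 else 0),
         (fun i j => if (i:ℕ) = (j:ℕ) + 1 then 1 else 0),
         (fun i j =>
           if h : (i:ℕ) = 0 then 0
           else M ⟨(i:ℕ) - 1, by have := i.isLt; omega⟩ j)) := by
  obtain ⟨C, B, A⟩ := T
  obtain ⟨ΔC, ΔB, hsmall, hK⟩ := exists_small_isUnit_det_ctrbMatrix_add C B hε
  obtain ⟨M, hM⟩ :=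
    exists_FST_normalForm_of_isUnit_det_ctrbMatrix (by omega) (C + ΔC) (B + ΔB) A hK
  refine ⟨(ΔC, ΔB, 0), M, ?_, ?_⟩
  · simpa [tnorm, fnorm] using hsmall
  · rw [Prod.mk_add_mk, Prod.mk_add_mk, add_zero]
    exact hM
end

section
/- Two m×(n,m,m) triples T = (C,B,A) and T' = (C',B',A') are feedback similar if and only if there exist invertible complex matrices S ∈ ℂ^{m×m} and R ∈ ℂ^{(n+2m)×(n+2m)} such that for all x, y ∈ ℂ: S · [C' (xI_m+B') (yI_m+A')] = [C (xI_m+B) (yI_m+A)] · R, where [C (xI_m+B) (yI_m+A)] denotes the m×(n+2m) block matrix with the indicated three blocks. -/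
open Matrix

/-- The block matrix `[C B A]` of a triple, of size `m×(n+2m)`. -/
def hcat3 {m n : ℕ} (C : Matrix (Fin m) (Fin n) ℂ) (B A : Matrix (Fin m) (Fin m) ℂ) :
    Matrix (Fin m) (Fin (n + 2*m)) ℂ := fun i j =>
  if h1 : (j:ℕ) < n then C i ⟨j, h1⟩
  else if h2 : (j:ℕ) < n + m then B i ⟨(j:ℕ) - n, by omega⟩
  else A i ⟨(j:ℕ) - (n + m), by have := j.isLt; omega⟩

/-! Write `M(x, y) = [C  xI+B  yI+A]` as `M₀ + x E₂ + y E₃` with `E₂ = [0 I 0]`, `E₃ = [0 0 I]`.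
An identity `S M'(x, y) = M(x, y) R` for all `x, y` splits into `S M'₀ = M₀ R`, `S E₂ = E₂ R` and
`S E₃ = E₃ R`. The last two force `R = [[P, V, U], [0, S, 0], [0, 0, S]]`, which is invertible iff
`P` and `S` are, and for such `R` the first one reads `S C' = C P`, `S B' = B S + C V`,
`S A' = A S + C U`: feedback similarity. -/

theorem forall_add_smul_add_smul_eq_iff {R M : Type*} [Ring R] [AddCommGroup M] [Module R M]
    {a b c a' b' c' : M} :
    (∀ x y : R, a + x • b + y • c = a' + x • b' + y • c') ↔ a = a' ∧ b = b' ∧ c = c' := by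
  refine ⟨fun h ↦ ?_, by rintro ⟨rfl, rfl, rfl⟩ _ _; rfl⟩
  have h₀ := h 0 0
  have h₁ := h 1 0
  have h₂ := h 0 1
  simp only [zero_smul, one_smul, add_zero] at h₀ h₁ h₂
  exact ⟨h₀, by simpa [h₀] using h₁, by simpa [h₀] using h₂⟩

namespace Matrix

variable {K : Type*} [CommRing K] {m n : Type*} [DecidableEq m]

-- `m` is explicit: with `m` implicit, `S * unitBlockRow₂ K n` picks up `CStarMatrix`'s `HMul`.
variable (K m n) in
def unitBlockRow₂ : Matrix m (n ⊕ (m ⊕ m)) K := fromCols 0 (fromCols 1 0)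

variable (K m n) in
def unitBlockRow₃ : Matrix m (n ⊕ (m ⊕ m)) K := fromCols 0 (fromCols 0 1)

theorem fromCols_smul_one_add (C : Matrix m n K) (B A : Matrix m m K) (x y : K) :
    fromCols C (fromCols (x • 1 + B) (y • 1 + A)) =
      fromCols C (fromCols B A) + x • unitBlockRow₂ K m n + y • unitBlockRow₃ K m n := by
  ext i (j | j | j) <;> simp [unitBlockRow₂, unitBlockRow₃, add_comm]

variable [Fintype m]

theorem mul_unitBlockRow₂ (S : Matrix m m K) :
    S * unitBlockRow₂ K m n = fromCols 0 (fromCols S 0) := by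
  simp [unitBlockRow₂, mul_fromCols]

theorem mul_unitBlockRow₃ (S : Matrix m m K) :
    S * unitBlockRow₃ K m n = fromCols 0 (fromCols 0 S) := by
  simp [unitBlockRow₃, mul_fromCols]

theorem eq_nonsing_inv_mul_iff {S : Matrix m m K} (hS : IsUnit S) {X Y : Matrix m n K} :
    Y = S⁻¹ * X ↔ S * Y = X := by
  let _ := hS.invertible
  rw [eq_comm, inv_mul_eq_iff_eq_mul_of_invertible, eq_comm]

theorem exists_isUnit_mul_reindex_iff {α β ι ι' : Type*} [Fintype ι] [DecidableEq ι] [Fintype ι']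
    [DecidableEq ι'] (e : ι ≃ ι') (F G : α → β → Matrix m ι K) :
    (∃ (S : Matrix m m K) (R : Matrix ι' ι' K), IsUnit S ∧ IsUnit R ∧
        ∀ x y, S * reindex (Equiv.refl m) e (G x y) = reindex (Equiv.refl m) e (F x y) * R) ↔
      ∃ (S : Matrix m m K) (R : Matrix ι ι K), IsUnit S ∧ IsUnit R ∧
        ∀ x y, S * G x y = F x y * R := by
  refine exists_congr fun S ↦ (reindex e e).surjective.exists.trans (exists_congr fun R ↦ ?_)
  have mul_reindex (X : Matrix m ι K) :
      S * reindex (Equiv.refl m) e X = reindex (Equiv.refl m) e (S * X) := by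
    ext i j
    simp [mul_apply]
  have reindex_mul (X : Matrix m ι K) :
      reindex (Equiv.refl m) e X * reindex e e R = reindex (Equiv.refl m) e (X * R) := by
    simp [reindex_apply]
  simp only [isUnit_iff_isUnit_det, det_reindex_self, mul_reindex, reindex_mul,
    (reindex _ _).injective.eq_iff]

variable [Fintype n]

theorem unitBlockRow₂_mul (R : Matrix (n ⊕ (m ⊕ m)) (n ⊕ (m ⊕ m)) K) :
    unitBlockRow₂ K m n * R = R.submatrix (Sum.inr ∘ Sum.inl) id := by
  ext i j
  simp [unitBlockRow₂, mul_apply, Fintype.sum_sum_type, one_apply]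

theorem unitBlockRow₃_mul (R : Matrix (n ⊕ (m ⊕ m)) (n ⊕ (m ⊕ m)) K) :
    unitBlockRow₃ K m n * R = R.submatrix (Sum.inr ∘ Sum.inr) id := by
  ext i j
  simp [unitBlockRow₃, mul_apply, Fintype.sum_sum_type, one_apply]

theorem forall_mul_fromCols_smul_one_add_iff (S : Matrix m m K)
    (R : Matrix (n ⊕ (m ⊕ m)) (n ⊕ (m ⊕ m)) K) (C C' : Matrix m n K) (B B' A A' : Matrix m m K) :
    (∀ x y : K, S * fromCols C' (fromCols (x • 1 + B') (y • 1 + A')) =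
        fromCols C (fromCols (x • 1 + B) (y • 1 + A)) * R) ↔
      S * fromCols C' (fromCols B' A') = fromCols C (fromCols B A) * R ∧
        S * unitBlockRow₂ K m n = unitBlockRow₂ K m n * R ∧
        S * unitBlockRow₃ K m n = unitBlockRow₃ K m n * R := by
  simp only [fromCols_smul_one_add, Matrix.mul_add, Matrix.add_mul, Matrix.mul_smul,
    Matrix.smul_mul]
  exact forall_add_smul_add_smul_eq_iff

def feedbackMatrix (P : Matrix n n K) (V U : Matrix n m K) (S : Matrix m m K) :
    Matrix (n ⊕ (m ⊕ m)) (n ⊕ (m ⊕ m)) K :=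
  fromBlocks P (fromCols V U) 0 (fromBlocks S 0 0 S)

theorem isUnit_feedbackMatrix_iff [DecidableEq n] {P : Matrix n n K} {V U : Matrix n m K}
    {S : Matrix m m K} : IsUnit (feedbackMatrix P V U S) ↔ IsUnit P ∧ IsUnit S := by
  simp only [isUnit_iff_isUnit_det, feedbackMatrix, det_fromBlocks_zero₂₁, IsUnit.mul_iff,
    and_self]

theorem fromCols_mul_feedbackMatrix (C : Matrix m n K) (B A : Matrix m m K) (P : Matrix n n K)
    (V U : Matrix n m K) (S : Matrix m m K) :
    fromCols C (fromCols B A) * feedbackMatrix P V U S =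
      fromCols (C * P) (fromCols (B * S + C * V) (A * S + C * U)) := by
  ext i (j | j | j) <;> simp [feedbackMatrix, fromCols_mul_fromBlocks, mul_fromCols, add_comm]

theorem unitBlockRows_commute_iff (S : Matrix m m K)
    (R : Matrix (n ⊕ (m ⊕ m)) (n ⊕ (m ⊕ m)) K) :
    (S * unitBlockRow₂ K m n = unitBlockRow₂ K m n * R ∧
        S * unitBlockRow₃ K m n = unitBlockRow₃ K m n * R) ↔
      ∃ P V U, R = feedbackMatrix P V U S := by
  simp only [mul_unitBlockRow₂, mul_unitBlockRow₃, unitBlockRow₂_mul, unitBlockRow₃_mul]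
  constructor
  · rintro ⟨h₂, h₃⟩
    refine ⟨R.toBlocks₁₁, R.toBlocks₁₂.toCols₁, R.toBlocks₁₂.toCols₂, ?_⟩
    ext (i | i | i) j
    · rcases j with j | j | j <;> rfl
    · rw [show R (.inr (.inl i)) j = R.submatrix (Sum.inr ∘ Sum.inl) id i j from rfl, ← h₂]
      rcases j with j | j | j <;> simp [feedbackMatrix]
    · rw [show R (.inr (.inr i)) j = R.submatrix (Sum.inr ∘ Sum.inr) id i j from rfl, ← h₃]
      rcases j with j | j | j <;> simp [feedbackMatrix]
  · rintro ⟨P, V, U, rfl⟩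
    constructor <;> ext i (j | j | j) <;> simp [feedbackMatrix]

theorem exists_isUnit_mul_fromCols_smul_one_add_iff [DecidableEq n] (C C' : Matrix m n K)
    (B B' A A' : Matrix m m K) :
    (∃ (S : Matrix m m K) (R : Matrix (n ⊕ (m ⊕ m)) (n ⊕ (m ⊕ m)) K), IsUnit S ∧ IsUnit R ∧
        ∀ x y : K, S * fromCols C' (fromCols (x • 1 + B') (y • 1 + A')) =
          fromCols C (fromCols (x • 1 + B) (y • 1 + A)) * R) ↔
      ∃ (S : Matrix m m K) (P : Matrix n n K) (U V : Matrix n m K), IsUnit S ∧ IsUnit P ∧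
        S * C' = C * P ∧ S * B' = B * S + C * V ∧ S * A' = A * S + C * U := by
  simp only [forall_mul_fromCols_smul_one_add_iff, unitBlockRows_commute_iff]
  constructor
  · rintro ⟨S, R, hS, hR, hSR, P, V, U, rfl⟩
    rw [fromCols_mul_feedbackMatrix, mul_fromCols, mul_fromCols, fromCols_ext_iff,
      fromCols_ext_iff] at hSR
    exact ⟨S, P, U, V, hS, (isUnit_feedbackMatrix_iff.mp hR).1, hSR⟩
  · rintro ⟨S, P, U, V, hS, hP, hC, hB, hA⟩
    refine ⟨S, feedbackMatrix P V U S, hS, isUnit_feedbackMatrix_iff.mpr ⟨hP, hS⟩, ?_,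
      P, V, U, rfl⟩
    rw [fromCols_mul_feedbackMatrix, mul_fromCols, mul_fromCols, hC, hB, hA]

end Matrix

def blockColsEquiv (m n : ℕ) : Fin n ⊕ (Fin m ⊕ Fin m) ≃ Fin (n + 2 * m) :=
  (Equiv.sumCongr (Equiv.refl _) finSumFinEquiv).trans (finSumFinEquiv.trans (finCongr (by omega)))

theorem hcat3_eq_reindex {m n : ℕ} (C : Matrix (Fin m) (Fin n) ℂ) (B A : Matrix (Fin m) (Fin m) ℂ) :
    hcat3 C B A = reindex (Equiv.refl _) (blockColsEquiv m n) (fromCols C (fromCols B A)) := by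
  ext i j
  obtain ⟨k, rfl⟩ := (blockColsEquiv m n).surjective j
  simp only [reindex_apply, submatrix_apply, Equiv.refl_symm, Equiv.coe_refl, id,
    Equiv.symm_apply_apply]
  rcases k with k | k | k <;> simp [hcat3, blockColsEquiv, Nat.add_sub_add_left]

theorem FST_iff {m n : ℕ} {T T' : TripleT m n} :
    FST T T' ↔ ∃ (S : Matrix (Fin m) (Fin m) ℂ) (P : Matrix (Fin n) (Fin n) ℂ)
      (U V : Matrix (Fin n) (Fin m) ℂ), IsUnit S ∧ IsUnit P ∧ S * T'.1 = T.1 * P ∧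
        S * T'.2.1 = T.2.1 * S + T.1 * V ∧ S * T'.2.2 = T.2.2 * S + T.1 * U := by
  refine exists₄_congr fun S P U V ↦ and_congr_right fun hS ↦ ?_
  rw [Matrix.mul_assoc, eq_nonsing_inv_mul_iff hS, eq_nonsing_inv_mul_iff hS,
    eq_nonsing_inv_mul_iff hS]

/-- Lemma 12 of the paper: two triples are feedback similar iff the
corresponding polynomial matrices `[C  xI+B  yI+A]` are strictly equivalent. -/
theorem stmt13 (m n : ℕ) (T T' : TripleT m n) :
    FST T T' ↔
      ∃ (S : Matrix (Fin m) (Fin m) ℂ) (R : Matrix (Fin (n + 2*m)) (Fin (n + 2*m)) ℂ),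
        IsUnit S ∧ IsUnit R ∧
        ∀ x y : ℂ,
          S * hcat3 T'.1 (x • (1 : Matrix (Fin m) (Fin m) ℂ) + T'.2.1)
              (y • (1 : Matrix (Fin m) (Fin m) ℂ) + T'.2.2) =
            hcat3 T.1 (x • (1 : Matrix (Fin m) (Fin m) ℂ) + T.2.1)
              (y • (1 : Matrix (Fin m) (Fin m) ℂ) + T.2.2) * R := by
  obtain ⟨C, B, A⟩ := T
  obtain ⟨C', B', A'⟩ := T'
  simp only [hcat3_eq_reindex]
  rw [FST_iff, exists_isUnit_mul_reindex_iff, exists_isUnit_mul_fromCols_smul_one_add_iff]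
end

section
/- Let p ≥ 1 and q ≥ 0, and let T and T' be p×(q,p,p) triples. Then ℒ(T) and ℒ(T') are feedback similar (as (2p+q)×(p+q,2p+q,2p+q) triples) if and only if T and T' are feedback similar. -/
open Matrix

/-- For a `p×(q,p,p)` triple `(C,B,A)`, the `(2p+q)×(p+q,2p+q,2p+q)` triple
`ℒ(C,B,A) = ([I_{p+q}; 0], [0; [0_{p,q} I_p 0_{p,p}]], [0; [C B A]])`,
written entrywise. -/
def Ltriple {p q : ℕ} (T : TripleT p q) : TripleT (2*p+q) (p+q) :=
  (fun i j => if (i:ℕ) = (j:ℕ) then 1 else 0,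
   fun i j => if p + q ≤ (i:ℕ) ∧ (j:ℕ) + p = (i:ℕ) then 1 else 0,
   fun i j =>
     if hi : (i:ℕ) < p + q then 0
     else if hj : (j:ℕ) < q then
       T.1 ⟨(i:ℕ) - (p+q), by have := i.isLt; omega⟩ ⟨j, hj⟩
     else if hj2 : (j:ℕ) < q + p then
       T.2.1 ⟨(i:ℕ) - (p+q), by have := i.isLt; omega⟩ ⟨(j:ℕ) - q, by omega⟩
     else
       T.2.2 ⟨(i:ℕ) - (p+q), by have := i.isLt; omega⟩
         ⟨(j:ℕ) - (q+p), by have := j.isLt; omega⟩)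

/-! Write a transformation `(S, P, U, V)` between `ℒ(T)` and `ℒ(T')` in block form. The equation for
the first matrices forces `S = [[P, S₁₂], [0, S₂₂]]`; the one for the second matrices forces
`P = [[P₁₁, P₁₂], [0, S₂₂]]` and `S₁₂ = [X; 0]`; the one for the third matrices then says exactly
that `(S₂₂, P₁₁, X, P₁₂)` transforms `T` into `T'`. Conversely, these block formulas turn a
transformation of `T` into one of `ℒ(T)`. -/

abbrev MatrixTriple (m n R : Type*) := Matrix m n R × Matrix m m R × Matrix m m R

section

variable {R : Type*} [CommRing R] {m n m' n' : Type*} [Fintype m] [Fintype n] [DecidableEq m]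
  [DecidableEq n] [Fintype m'] [Fintype n'] [DecidableEq m'] [DecidableEq n']

/-- `FST` is this notion for `Fin` index types over `ℂ`. -/
def FeedbackSimilar (X Y : MatrixTriple m n R) : Prop :=
  ∃ (S : Matrix m m R) (P : Matrix n n R) (U V : Matrix n m R),
    IsUnit S ∧ IsUnit P ∧ Y.1 = S⁻¹ * X.1 * P ∧
    Y.2.1 = S⁻¹ * (X.2.1 * S + X.1 * V) ∧ Y.2.2 = S⁻¹ * (X.2.2 * S + X.1 * U)

theorem eq_inv_mul_iff_mul_eq_of_isUnit {k : Type*} {S : Matrix m m R} (hS : IsUnit S)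
    {Z W : Matrix m k R} : Z = S⁻¹ * W ↔ S * Z = W := by
  obtain ⟨_⟩ := hS.nonempty_invertible
  rw [eq_comm, inv_mul_eq_iff_eq_mul_of_invertible, eq_comm]

theorem feedbackSimilar_iff {X Y : MatrixTriple m n R} :
    FeedbackSimilar X Y ↔ ∃ (S : Matrix m m R) (P : Matrix n n R) (U V : Matrix n m R),
      IsUnit S ∧ IsUnit P ∧ S * Y.1 = X.1 * P ∧
      S * Y.2.1 = X.2.1 * S + X.1 * V ∧ S * Y.2.2 = X.2.2 * S + X.1 * U := by
  refine exists₄_congr fun S P U V => and_congr_right fun hS => and_congr_right fun _ => ?_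
  simp only [Matrix.mul_assoc, eq_inv_mul_iff_mul_eq_of_isUnit hS]

def MatrixTriple.reindex (em : m ≃ m') (en : n ≃ n') (X : MatrixTriple m n R) :
    MatrixTriple m' n' R :=
  (Matrix.reindex em en X.1, Matrix.reindex em em X.2.1, Matrix.reindex em em X.2.2)

theorem FeedbackSimilar.reindex {X Y : MatrixTriple m n R} (em : m ≃ m') (en : n ≃ n')
    (h : FeedbackSimilar X Y) : FeedbackSimilar (X.reindex em en) (Y.reindex em en) := by
  rw [feedbackSimilar_iff] at h ⊢
  obtain ⟨S, P, U, V, hS, hP, hC, hB, hA⟩ := h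
  refine ⟨Matrix.reindex em em S, Matrix.reindex en en P, Matrix.reindex en em U,
    Matrix.reindex en em V, ?_, ?_, ?_, ?_, ?_⟩
  · simpa [isUnit_iff_isUnit_det] using hS
  · simpa [isUnit_iff_isUnit_det] using hP
  all_goals simp [MatrixTriple.reindex, reindex_apply, submatrix_mul_equiv, submatrix_add, *]

theorem feedbackSimilar_reindex_iff {X Y : MatrixTriple m n R} (em : m ≃ m') (en : n ≃ n') :
    FeedbackSimilar (X.reindex em en) (Y.reindex em en) ↔ FeedbackSimilar X Y := by
  refine ⟨fun h => ?_, FeedbackSimilar.reindex em en⟩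
  simpa [MatrixTriple.reindex] using h.reindex em.symm en.symm

/-- `ℒ(T)` in block form: the `2p+q` coordinates are split as `(n ⊕ m) ⊕ m`, where `n` plays the
role of `q` and `m` that of `p`. -/
def MatrixTriple.linearization (T : MatrixTriple m n R) :
    MatrixTriple ((n ⊕ m) ⊕ m) (n ⊕ m) R :=
  (fromRows 1 0, fromBlocks 0 0 (fromCols 0 1) 0, fromBlocks 0 0 (fromCols T.1 T.2.1) T.2.2)

theorem FeedbackSimilar.linearization {T T' : MatrixTriple m n R} (h : FeedbackSimilar T T') :
    FeedbackSimilar T.linearization T'.linearization := by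
  rw [feedbackSimilar_iff] at h ⊢
  obtain ⟨S, P, U, V, hS, hP, hC, hB, hA⟩ := h
  set W : Matrix (n ⊕ m) m R := fromRows U 0
  refine ⟨fromBlocks (fromBlocks P V 0 S) W 0 S, fromBlocks P V 0 S,
    fromCols (W * fromCols T'.1 T'.2.1) (W * T'.2.2), fromCols (fromCols 0 W) 0,
    ?_, ?_, ?_, ?_, ?_⟩
  · simp [hS, hP]
  · simp [hS, hP]
  · simp [MatrixTriple.linearization, fromBlocks_mul_fromRows]
  · rw [MatrixTriple.linearization, MatrixTriple.linearization, fromRows_mul_fromCols]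
    simp [fromBlocks_multiply, fromCols_mul_fromBlocks, fromCols_mul_fromRows, fromBlocks_add, W]
  · rw [MatrixTriple.linearization, MatrixTriple.linearization, fromRows_mul_fromCols]
    simp [fromBlocks_multiply, fromCols_mul_fromBlocks, fromCols_mul_fromRows, fromBlocks_add, W,
      hC, hB, hA, add_comm]

theorem FeedbackSimilar.of_linearization {T T' : MatrixTriple m n R}
    (h : FeedbackSimilar T.linearization T'.linearization) : FeedbackSimilar T T' := by
  rw [feedbackSimilar_iff] at h ⊢
  obtain ⟨S, P, U, V, -, hP, hC, hB, hA⟩ := h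
  obtain ⟨S₁₁, S₁₂, S₂₁, S₂₂, rfl⟩ : ∃ a b c d, S = fromBlocks a b c d :=
    ⟨_, _, _, _, (fromBlocks_toBlocks S).symm⟩
  obtain ⟨X, Y, rfl⟩ : ∃ a b, S₁₂ = fromRows a b := ⟨_, _, (fromRows_toRows S₁₂).symm⟩
  obtain ⟨P₁₁, P₁₂, P₂₁, P₂₂, rfl⟩ : ∃ a b c d, P = fromBlocks a b c d :=
    ⟨_, _, _, _, (fromBlocks_toBlocks P).symm⟩
  obtain ⟨U₁, U₂, rfl⟩ : ∃ a b, U = fromCols a b := ⟨_, _, (fromCols_toCols U).symm⟩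
  obtain ⟨V₁, V₂, rfl⟩ : ∃ a b, V = fromCols a b := ⟨_, _, (fromCols_toCols V).symm⟩
  simp only [MatrixTriple.linearization] at hC hB hA
  rw [fromRows_mul_fromCols] at hB hA
  simp only [fromBlocks_mul_fromRows, fromRows_mul, Matrix.mul_one, Matrix.mul_zero,
    Matrix.zero_mul, add_zero, fromRows_ext_iff] at hC
  obtain ⟨rfl, rfl⟩ := hC
  simp only [fromBlocks_multiply, fromCols_mul_fromBlocks, fromCols_mul_fromRows, mul_fromCols,
    Matrix.mul_zero, Matrix.zero_mul, Matrix.mul_one, Matrix.one_mul, zero_add, add_zero,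
    fromBlocks_add, fromBlocks_inj, fromCols_ext_iff] at hB
  obtain ⟨-, -, ⟨rfl, rfl⟩, rfl⟩ := hB
  simp only [fromBlocks_multiply, fromCols_mul_fromBlocks, fromCols_mul_fromRows, mul_fromCols,
    fromRows_mul, fromCols_fromRows_eq_fromBlocks, Matrix.mul_zero, Matrix.zero_mul,
    Matrix.one_mul, zero_add, add_zero, fromBlocks_add, fromBlocks_inj, fromCols_ext_iff] at hA
  obtain ⟨-, -, ⟨hC', hB'⟩, hA'⟩ := hA
  simp only [isUnit_fromBlocks_zero₂₁] at hP
  exact ⟨S₂₂, P₁₁, X, P₁₂, hP.2, hP.1, hC', by rw [hB', add_comm], by rw [hA', add_comm]⟩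

theorem feedbackSimilar_linearization_iff {T T' : MatrixTriple m n R} :
    FeedbackSimilar T.linearization T'.linearization ↔ FeedbackSimilar T T' :=
  ⟨.of_linearization, .linearization⟩

end

section

variable (p q : ℕ)

def linearizationColEquiv : Fin q ⊕ Fin p ≃ Fin (p + q) :=
  finSumFinEquiv.trans (finCongr (Nat.add_comm q p))

def linearizationRowEquiv : (Fin q ⊕ Fin p) ⊕ Fin p ≃ Fin (2 * p + q) :=
  (Equiv.sumCongr (linearizationColEquiv p q) (Equiv.refl _)).trans
    (finSumFinEquiv.trans (finCongr (by omega)))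

variable {p q}

@[simp] theorem val_linearizationColEquiv_inl (a : Fin q) :
    (linearizationColEquiv p q (.inl a) : ℕ) = a := rfl

@[simp] theorem val_linearizationColEquiv_inr (b : Fin p) :
    (linearizationColEquiv p q (.inr b) : ℕ) = q + b := rfl

@[simp] theorem val_linearizationRowEquiv_inl (x : Fin q ⊕ Fin p) :
    (linearizationRowEquiv p q (.inl x) : ℕ) = linearizationColEquiv p q x := rfl

@[simp] theorem val_linearizationRowEquiv_inr (c : Fin p) :
    (linearizationRowEquiv p q (.inr c) : ℕ) = p + q + c := rfl

theorem Ltriple_eq_reindex_linearization (T : TripleT p q) :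
    Ltriple T = (MatrixTriple.linearization T).reindex (linearizationRowEquiv p q)
      (linearizationColEquiv p q) := by
  refine Prod.ext ?_ (Prod.ext ?_ ?_) <;> ext i j <;>
    obtain ⟨x, rfl⟩ := (linearizationRowEquiv p q).surjective i
  · obtain ⟨y, rfl⟩ := (linearizationColEquiv p q).surjective j
    rcases x with (a | b) | c <;> rcases y with a' | b' <;>
      simp only [Ltriple, MatrixTriple.linearization, MatrixTriple.reindex, reindex_apply,
        submatrix_apply, Equiv.symm_apply_apply, val_linearizationRowEquiv_inl,
        val_linearizationRowEquiv_inr, val_linearizationColEquiv_inl,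
        val_linearizationColEquiv_inr, fromRows_apply_inl, fromRows_apply_inr, one_apply,
        Matrix.zero_apply] <;> grind
  all_goals
    obtain ⟨y, rfl⟩ := (linearizationRowEquiv p q).surjective j
    rcases x with (a | b) | c <;> rcases y with (a' | b') | c' <;>
      simp only [Ltriple, MatrixTriple.linearization, MatrixTriple.reindex, reindex_apply,
        submatrix_apply, Equiv.symm_apply_apply, val_linearizationRowEquiv_inl,
        val_linearizationRowEquiv_inr, val_linearizationColEquiv_inl,
        val_linearizationColEquiv_inr, fromBlocks_apply₁₁, fromBlocks_apply₁₂,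
        fromBlocks_apply₂₁, fromBlocks_apply₂₂, fromCols_apply_inl, fromCols_apply_inr,
        one_apply, Matrix.zero_apply] <;> grind

end

theorem stmt14_general (p q : ℕ) (T T' : TripleT p q) :
    FST (Ltriple T) (Ltriple T') ↔ FST T T' := by
  rw [Ltriple_eq_reindex_linearization, Ltriple_eq_reindex_linearization]
  exact (feedbackSimilar_reindex_iff _ _).trans feedbackSimilar_linearization_iff

/-- `ℒ(T)` and `ℒ(T')` are feedback similar iff `T` and `T'` are. -/
theorem stmt14 (p q : ℕ) (hp : 1 ≤ p) (T T' : TripleT p q) :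
    FST (Ltriple T) (Ltriple T') ↔ FST T T' :=
  stmt14_general p q T T'
end
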